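/- arXiv:2503.02965 — 9 statements merged into one kernel-verified Lean document; each statement's English description precedes it below -/
import Mathlib

section
/- Let (λₙ)_{n≥1} be a summable sequence of nonnegative reals and let s ≤ 0 be real. For y ∈ ℝ define θ(y) := ∑_{n≥1} arctan(−2yλₙ / (1 − 2sλₙ)), which converges absolutely. Then: (i) θ is nonincreasing on ℝ, and strictly decreasing if λₙ > 0 for at least one n; (ii) if the set {n : λₙ > 0} is finite with cardinality N, then θ(y) → −Nπ/2 as y → +∞ and θ(y) → Nπ/2 as y → −∞; (iii) if the set {n : λₙ > 0} is infinite, then θ(y) → −∞ as y → +∞ and θ(y) → +∞ as y → −∞. -/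
/-!
Each term `arctan (-2yλₙ / (1 - 2sλₙ))` is bounded by `2|y|λₙ`, which gives absolute
convergence, and is nonincreasing in `y`, strictly so and with limit `-π/2` at `+∞` when
`λₙ > 0`. Summing term by term gives monotonicity and, for finitely many positive `λₙ`,
the limit `-Nπ/2`. When infinitely many `λₙ` are positive, all terms are `≤ 0` for
`y ≥ 0`, so `θ` lies below any finite partial sum over `k` positive indices, which tends
to `-kπ/2`. The behaviour at `-∞` follows since `θ` is odd.
-/

open Filter Topology

/-- The function `θ(y) := ∑_{n} arctan (−2yλₙ / (1 − 2sλₙ))`. -/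
noncomputable def thetaFun (lam : ℕ → ℝ) (s : ℝ) (y : ℝ) : ℝ :=
  ∑' n, Real.arctan (-2 * y * lam n / (1 - 2 * s * lam n))

open Real

lemma abs_arctan_le_abs (x : ℝ) : |arctan x| ≤ |x| := by
  have arctan_le_self : ∀ t : ℝ, 0 ≤ t → arctan t ≤ t := fun t ht => by
    simpa only [tan_arctan] using le_tan (arctan_nonneg.2 ht) (arctan_lt_pi_div_two t)
  rcases le_or_gt 0 x with hx | hx
  · rw [abs_of_nonneg hx, abs_of_nonneg (arctan_nonneg.2 hx)]
    exact arctan_le_self x hx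
  · rw [abs_of_neg hx, abs_of_neg (arctan_lt_zero.2 hx), ← arctan_neg]
    exact arctan_le_self (-x) (by linarith)

lemma tsum_le_sum_of_nonpos {ι : Type*} {f : ι → ℝ} (hf : Summable f) (s : Finset ι)
    (h : ∀ i ∉ s, f i ≤ 0) : ∑' i, f i ≤ ∑ i ∈ s, f i := by
  have := hf.neg.sum_le_tsum s fun i hi => neg_nonneg.2 (h i hi)
  rwa [tsum_neg, Finset.sum_neg_distrib, neg_le_neg_iff] at this

lemma tendsto_atBot_of_odd {f : ℝ → ℝ} (hf : ∀ y, f (-y) = -f y) {a : ℝ}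
    (h : Tendsto f atTop (𝓝 a)) : Tendsto f atBot (𝓝 (-a)) := by
  rw [← tendsto_comp_neg_atTop_iff, funext hf]
  exact h.neg

lemma tendsto_atBot_atTop_of_odd {f : ℝ → ℝ} (hf : ∀ y, f (-y) = -f y)
    (h : Tendsto f atTop atBot) : Tendsto f atBot atTop := by
  rw [← tendsto_comp_neg_atTop_iff, funext hf]
  exact tendsto_neg_atTop_iff.2 h

lemma one_le_one_sub_two_mul_mul {s l : ℝ} (hs : s ≤ 0) (hl : 0 ≤ l) :
    1 ≤ 1 - 2 * s * l := by
  nlinarith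

noncomputable def thetaTerm (lam : ℕ → ℝ) (s y : ℝ) (n : ℕ) : ℝ :=
  arctan (-2 * y * lam n / (1 - 2 * s * lam n))

lemma thetaFun_eq_tsum (lam : ℕ → ℝ) (s y : ℝ) :
    thetaFun lam s y = ∑' n, thetaTerm lam s y n := rfl

lemma thetaTerm_neg (lam : ℕ → ℝ) (s y : ℝ) (n : ℕ) :
    thetaTerm lam s (-y) n = -thetaTerm lam s y n := by
  rw [thetaTerm, thetaTerm, ← arctan_neg]
  ring_nf

lemma thetaFun_neg (lam : ℕ → ℝ) (s y : ℝ) : thetaFun lam s (-y) = -thetaFun lam s y := by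
  simp only [thetaFun_eq_tsum, thetaTerm_neg, tsum_neg]

section Terms

variable {lam : ℕ → ℝ} {s : ℝ} {n : ℕ}

lemma abs_thetaTerm_le (hl : 0 ≤ lam n) (hs : s ≤ 0) (y : ℝ) :
    |thetaTerm lam s y n| ≤ 2 * |y| * lam n := by
  have hd := one_le_one_sub_two_mul_mul hs hl
  calc |thetaTerm lam s y n|
      ≤ |-2 * y * lam n / (1 - 2 * s * lam n)| := abs_arctan_le_abs _
    _ = |-2 * y * lam n| / (1 - 2 * s * lam n) := by
        rw [abs_div, abs_of_pos (show 0 < 1 - 2 * s * lam n by linarith)]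
    _ ≤ |-2 * y * lam n| := div_le_self (abs_nonneg _) hd
    _ = 2 * |y| * lam n := by rw [abs_mul, abs_mul, abs_neg, abs_two, abs_of_nonneg hl]

lemma thetaTerm_antitone (hl : 0 ≤ lam n) (hs : s ≤ 0) :
    Antitone fun y => thetaTerm lam s y n := fun y₁ y₂ h => by
  have hd := one_le_one_sub_two_mul_mul hs hl
  refine arctan_strictMono.monotone (div_le_div_of_nonneg_right ?_ (by linarith))
  nlinarith [mul_nonneg hl (sub_nonneg.2 h)]

lemma thetaTerm_strictAnti (hl : 0 < lam n) (hs : s ≤ 0) :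
    StrictAnti fun y => thetaTerm lam s y n := fun y₁ y₂ h => by
  have hd := one_le_one_sub_two_mul_mul hs hl.le
  refine arctan_strictMono ((div_lt_div_iff_of_pos_right (by linarith)).2 ?_)
  nlinarith

lemma thetaTerm_nonpos (hl : 0 ≤ lam n) (hs : s ≤ 0) {y : ℝ} (hy : 0 ≤ y) :
    thetaTerm lam s y n ≤ 0 := by
  simpa [thetaTerm] using thetaTerm_antitone hl hs hy

lemma thetaTerm_of_eq_zero (hl : lam n = 0) (s y : ℝ) : thetaTerm lam s y n = 0 := by
  simp [thetaTerm, hl]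

lemma tendsto_thetaTerm_atTop (hl : 0 < lam n) (hs : s ≤ 0) :
    Tendsto (fun y => thetaTerm lam s y n) atTop (𝓝 (-(π / 2))) := by
  have hd := one_le_one_sub_two_mul_mul hs hl.le
  have hslope : -2 * lam n / (1 - 2 * s * lam n) < 0 :=
    div_neg_of_neg_of_pos (by linarith) (by linarith)
  have hlin := (tendsto_const_mul_atBot_of_neg hslope).2 tendsto_id
  refine ((tendsto_arctan_atBot.mono_right nhdsWithin_le_nhds).comp hlin).congr fun y => ?_
  simp only [Function.comp, id, thetaTerm]
  ring_nf

end Terms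

section Theta

variable {lam : ℕ → ℝ} {s : ℝ}

lemma summable_abs_thetaTerm (hnn : ∀ n, 0 ≤ lam n) (hsum : Summable lam) (hs : s ≤ 0)
    (y : ℝ) :
    Summable fun n => |thetaTerm lam s y n| :=
  (hsum.mul_left (2 * |y|)).of_nonneg_of_le (fun _ => abs_nonneg _)
    fun n => abs_thetaTerm_le (hnn n) hs y

lemma summable_thetaTerm (hnn : ∀ n, 0 ≤ lam n) (hsum : Summable lam) (hs : s ≤ 0) (y : ℝ) :
    Summable fun n => thetaTerm lam s y n :=
  (summable_abs_thetaTerm hnn hsum hs y).of_abs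

lemma thetaFun_antitone (hnn : ∀ n, 0 ≤ lam n) (hsum : Summable lam) (hs : s ≤ 0) :
    Antitone (thetaFun lam s) := fun _ _ h =>
  (summable_thetaTerm hnn hsum hs _).tsum_le_tsum (fun n => thetaTerm_antitone (hnn n) hs h)
    (summable_thetaTerm hnn hsum hs _)

lemma thetaFun_strictAnti (hnn : ∀ n, 0 ≤ lam n) (hsum : Summable lam) (hs : s ≤ 0)
    (hpos : ∃ n, 0 < lam n) : StrictAnti (thetaFun lam s) := fun _ _ h => by
  obtain ⟨m, hm⟩ := hpos
  exact (summable_thetaTerm hnn hsum hs _).tsum_lt_tsum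
    (fun n => thetaTerm_antitone (hnn n) hs h.le) (thetaTerm_strictAnti hm hs h)
    (summable_thetaTerm hnn hsum hs _)

lemma tendsto_sum_thetaTerm_atTop (hs : s ≤ 0) (F : Finset ℕ)
    (hF : ∀ n ∈ F, 0 < lam n) :
    Tendsto (fun y => ∑ n ∈ F, thetaTerm lam s y n) atTop (𝓝 (-(F.card : ℝ) * π / 2)) := by
  convert tendsto_finsetSum F fun n hn => tendsto_thetaTerm_atTop (hF n hn) hs using 2
  rw [Finset.sum_const, nsmul_eq_mul]
  ring

lemma tendsto_thetaFun_atTop_of_finite (hnn : ∀ n, 0 ≤ lam n) (hs : s ≤ 0)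
    (hfin : {n : ℕ | 0 < lam n}.Finite) :
    Tendsto (thetaFun lam s) atTop (𝓝 (-(hfin.toFinset.card : ℝ) * π / 2)) := by
  have hsupp : ∀ y, thetaFun lam s y = ∑ n ∈ hfin.toFinset, thetaTerm lam s y n := fun y =>
    tsum_eq_sum fun n hn => thetaTerm_of_eq_zero
      ((hnn n).eq_or_lt.resolve_right fun h => hn (hfin.mem_toFinset.2 h)).symm s y
  rw [funext hsupp]
  exact tendsto_sum_thetaTerm_atTop hs _ fun n hn => hfin.mem_toFinset.1 hn

lemma tendsto_thetaFun_atTop_of_infinite (hnn : ∀ n, 0 ≤ lam n) (hsum : Summable lam)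
    (hs : s ≤ 0) (hinf : {n : ℕ | 0 < lam n}.Infinite) :
    Tendsto (thetaFun lam s) atTop atBot := by
  refine tendsto_atBot.2 fun b => ?_
  obtain ⟨k, hk⟩ := exists_nat_gt (-2 * b / π)
  obtain ⟨F, hFpos, hFcard⟩ := hinf.exists_subset_card_eq k
  have hlim := tendsto_sum_thetaTerm_atTop hs F fun n hn => hFpos hn
  have hkb : -(F.card : ℝ) * π / 2 < b := by
    rw [hFcard]
    have := (div_lt_iff₀ pi_pos).1 hk
    linarith
  filter_upwards [hlim.eventually_lt_const hkb, eventually_ge_atTop 0] with y hy hy₀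
  calc thetaFun lam s y ≤ ∑ n ∈ F, thetaTerm lam s y n :=
        tsum_le_sum_of_nonpos (summable_thetaTerm hnn hsum hs y) F
          fun n _ => thetaTerm_nonpos (hnn n) hs hy₀
    _ ≤ b := hy.le

end Theta

/-- For a summable sequence `(λₙ)` of nonnegative reals and `s ≤ 0`,
the series defining `θ` converges absolutely; `θ` is nonincreasing, strictly decreasing
if some `λₙ > 0`; if `{n : λₙ > 0}` is finite of cardinality `N` then
`θ(y) → ∓Nπ/2` as `y → ±∞`; if it is infinite then `θ(y) → ∓∞` as `y → ±∞`. -/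
theorem stmt6 (lam : ℕ → ℝ) (hnn : ∀ n, 0 ≤ lam n) (hsum : Summable lam)
    (s : ℝ) (hs : s ≤ 0) :
    (∀ y : ℝ, Summable (fun n => |Real.arctan (-2 * y * lam n / (1 - 2 * s * lam n))|)) ∧
    Antitone (thetaFun lam s) ∧
    ((∃ n, 0 < lam n) → StrictAnti (thetaFun lam s)) ∧
    (∀ hfin : {n : ℕ | 0 < lam n}.Finite,
      Tendsto (thetaFun lam s) atTop
        (𝓝 (-(hfin.toFinset.card : ℝ) * Real.pi / 2)) ∧
      Tendsto (thetaFun lam s) atBot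
        (𝓝 ((hfin.toFinset.card : ℝ) * Real.pi / 2))) ∧
    ({n : ℕ | 0 < lam n}.Infinite →
      Tendsto (thetaFun lam s) atTop atBot ∧
      Tendsto (thetaFun lam s) atBot atTop) := by
  have hodd := thetaFun_neg lam s
  refine ⟨summable_abs_thetaTerm hnn hsum hs, thetaFun_antitone hnn hsum hs,
    thetaFun_strictAnti hnn hsum hs, fun hfin => ?_, fun hinf => ?_⟩
  · have htop := tendsto_thetaFun_atTop_of_finite hnn hs hfin
    refine ⟨htop, ?_⟩
    simpa [neg_div, neg_mul] using tendsto_atBot_of_odd hodd htop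
  · have htop := tendsto_thetaFun_atTop_of_infinite hnn hsum hs hinf
    exact ⟨htop, tendsto_atBot_atTop_of_odd hodd htop⟩
end

section
/- Let (λₙ)_{n≥1} be a summable sequence of nonnegative reals, let s ≤ 0 be real and r > 0. Let N_r denote the (necessarily finite) cardinality of the set {n : λₙ ≥ r}, and suppose N_r ≥ 3. Then for every real y with y > tan(π/N_r) · (1/(2r) − s), one has ∑_{n≥1} arctan(2yλₙ / (1 − 2sλₙ)) > π. -/
/-- For a summable sequence `(λₙ)` of nonnegative reals, `s ≤ 0`, `r > 0`,
if the (necessarily finite) number `N_r` of indices with `λₙ ≥ r` is at least `3`, then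
for every `y > tan (π / N_r) · (1/(2r) − s)` one has
`∑ₙ arctan (2yλₙ / (1 − 2sλₙ)) > π`. -/
theorem stmt7 (lam : ℕ → ℝ) (hnn : ∀ n, 0 ≤ lam n) (hsum : Summable lam)
    (s r : ℝ) (hs : s ≤ 0) (hr : 0 < r)
    (hN : 3 ≤ Nat.card {n : ℕ | r ≤ lam n}) :
    ∀ y : ℝ,
      Real.tan (Real.pi / (Nat.card {n : ℕ | r ≤ lam n} : ℝ)) * (1 / (2 * r) - s) < y →
      Real.pi < ∑' n, Real.arctan (2 * y * lam n / (1 - 2 * s * lam n)) := by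
  intro y hy
  set S : Set ℕ := {n : ℕ | r ≤ lam n} with hSdef
  -- finiteness of S
  have hfin : S.Finite := by
    have h0 : Filter.Tendsto lam Filter.cofinite (nhds 0) :=
      hsum.tendsto_cofinite_zero
    have hev : ∀ᶠ n in Filter.cofinite, lam n < r := h0.eventually (gt_mem_nhds hr)
    have : {n : ℕ | ¬ lam n < r}.Finite := Filter.eventually_cofinite.mp hev
    refine this.subset ?_
    intro n hn
    simp only [Set.mem_setOf_eq, not_lt] at *
    exact hn
  set N : ℕ := Nat.card S with hNdef
  have hNcard : N = hfin.toFinset.card := by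
    rw [hNdef, Nat.card_eq_card_finite_toFinset hfin]
  have hN0 : (0 : ℝ) < (N : ℝ) := by
    have : (0:ℕ) < N := by omega
    exact_mod_cast this
  have hN3 : (3 : ℝ) ≤ (N : ℝ) := by exact_mod_cast hN
  have hpi := Real.pi_pos
  -- π / N is in (0, π/2)
  have hdiv_pos : 0 < Real.pi / N := div_pos hpi hN0
  have hdiv_lt : Real.pi / N < Real.pi / 2 := by
    apply div_lt_div_of_pos_left hpi (by norm_num)
    linarith
  have htan_pos : 0 < Real.tan (Real.pi / N) := Real.tan_pos_of_pos_of_lt_pi_div_two hdiv_pos hdiv_lt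
  have hfac : 0 < 1 / (2 * r) - s := by
    have : 0 < 1 / (2 * r) := by positivity
    linarith
  have hy0 : 0 < y := lt_trans (by positivity) hy
  -- denominators
  have hden : ∀ n, 1 ≤ 1 - 2 * s * lam n := by
    intro n
    nlinarith [hnn n]
  have hdenpos : ∀ n, 0 < 1 - 2 * s * lam n := fun n => lt_of_lt_of_le one_pos (hden n)
  set g : ℕ → ℝ := fun n => Real.arctan (2 * y * lam n / (1 - 2 * s * lam n)) with hg
  have hgnn : ∀ n, 0 ≤ g n := by
    intro n
    have hx : 0 ≤ 2 * y * lam n / (1 - 2 * s * lam n) :=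
      div_nonneg (mul_nonneg (by positivity) (hnn n)) (le_of_lt (hdenpos n))
    have := Real.arctan_strictMono.monotone hx
    rwa [Real.arctan_zero] at this
  have hgle : ∀ n, g n ≤ 2 * y * lam n := by
    intro n
    set x := 2 * y * lam n / (1 - 2 * s * lam n) with hxdef
    have hx : 0 ≤ x :=
      div_nonneg (mul_nonneg (by positivity) (hnn n)) (le_of_lt (hdenpos n))
    have harct : 0 ≤ Real.arctan x := by
      have := Real.arctan_strictMono.monotone hx
      rwa [Real.arctan_zero] at this
    have h1 : Real.arctan x ≤ x := by
      have := Real.le_tan harct (Real.arctan_lt_pi_div_two x)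
      rwa [Real.tan_arctan] at this
    calc g n ≤ x := h1
      _ ≤ 2 * y * lam n / 1 :=
        div_le_div_of_nonneg_left (mul_nonneg (by positivity) (hnn n)) one_pos (hden n)
      _ = 2 * y * lam n := by ring
  have hgsum : Summable g :=
    Summable.of_nonneg_of_le hgnn hgle (by simpa [mul_assoc] using hsum.mul_left (2 * y))
  -- each term on S exceeds π/N
  have hbig : ∀ n ∈ hfin.toFinset, Real.pi / N < g n := by
    intro n hn
    rw [Set.Finite.mem_toFinset] at hn
    have hrlam : r ≤ lam n := hn
    have hlampos : 0 < lam n := lt_of_lt_of_le hr hrlam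
    have key : Real.tan (Real.pi / N) < 2 * y * lam n / (1 - 2 * s * lam n) := by
      rw [lt_div_iff₀ (hdenpos n)]
      have h1 : Real.tan (Real.pi / N) * (1 - 2 * s * lam n)
          ≤ Real.tan (Real.pi / N) * (lam n / r - 2 * s * lam n) := by
        apply mul_le_mul_of_nonneg_left _ (le_of_lt htan_pos)
        have : 1 ≤ lam n / r := (one_le_div hr).mpr hrlam
        linarith
      have h2 : Real.tan (Real.pi / N) * (lam n / r - 2 * s * lam n)
          < 2 * y * lam n := by
        have := mul_lt_mul_of_pos_right hy (by positivity : (0:ℝ) < 2 * lam n)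
        calc Real.tan (Real.pi / N) * (lam n / r - 2 * s * lam n)
            = Real.tan (Real.pi / N) * (1 / (2 * r) - s) * (2 * lam n) := by
              field_simp
          _ < y * (2 * lam n) := this
          _ = 2 * y * lam n := by ring
      linarith
    have := Real.arctan_strictMono key
    rwa [Real.arctan_tan (by linarith) hdiv_lt] at this
  -- sum over the finset exceeds π
  have hsumS : Real.pi < ∑ n ∈ hfin.toFinset, g n := by
    have hne : hfin.toFinset.Nonempty := by
      rw [← Finset.card_pos, ← hNcard]; omega
    have := Finset.sum_lt_sum_of_nonempty hne hbig
    have hconst : ∑ _n ∈ hfin.toFinset, Real.pi / N = Real.pi := by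
      rw [Finset.sum_const, ← hNcard, nsmul_eq_mul]
      field_simp
    linarith [hconst ▸ this]
  have hle : ∑ n ∈ hfin.toFinset, g n ≤ ∑' n, g n :=
    Summable.sum_le_tsum hfin.toFinset (fun n _ => hgnn n) hgsum
  exact lt_of_lt_of_le hsumS hle
end

section
/- Let (λₙ)_{n≥1} be a summable sequence of nonnegative reals, let x ∈ [0,1] and r > 0. Let N_r denote the (necessarily finite) cardinality of the set {n : λₙ ≥ r}, and suppose N_r ≥ 3. If y > 0 satisfies y² − (|1 − 2x| / tan(π/N_r)) · y + 1/r + x(1 − x) < 0, then ∑_{n≥1} arctan( λₙ y |1 − 2x| / (1 + λₙ(y² + x(1 − x))) ) > π. -/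
lemma arctan_le_self_aux {z : ℝ} (hz : 0 ≤ z) : Real.arctan z ≤ z := by
  rcases hz.eq_or_lt with h | h
  · simp [← h]
  · have h0 : 0 < Real.arctan z := by
      rw [← Real.arctan_zero]; exact Real.arctan_strictMono h
    have h1 := Real.lt_tan h0 (Real.arctan_lt_pi_div_two z)
    rw [Real.tan_arctan] at h1
    linarith

/-- For a summable sequence `(λₙ)` of nonnegative reals, `x ∈ [0,1]`,
`r > 0`, if the (necessarily finite) number `N_r` of indices with `λₙ ≥ r` is at least
`3`, and `y > 0` satisfies `y² − (|1 − 2x| / tan (π/N_r)) y + 1/r + x(1−x) < 0`, then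
`∑ₙ arctan (λₙ y |1 − 2x| / (1 + λₙ (y² + x(1−x)))) > π`. -/
theorem stmt8 (lam : ℕ → ℝ) (hnn : ∀ n, 0 ≤ lam n) (hsum : Summable lam)
    (x : ℝ) (hx : x ∈ Set.Icc (0 : ℝ) 1) (r : ℝ) (hr : 0 < r)
    (hN : 3 ≤ Nat.card {n : ℕ | r ≤ lam n}) :
    ∀ y : ℝ, 0 < y →
      y ^ 2 - (|1 - 2 * x| / Real.tan (Real.pi / (Nat.card {n : ℕ | r ≤ lam n} : ℝ))) * y
          + 1 / r + x * (1 - x) < 0 →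
      Real.pi <
        ∑' n, Real.arctan (lam n * y * |1 - 2 * x| / (1 + lam n * (y ^ 2 + x * (1 - x)))) := by
  intro y hy hlt
  have hpi := Real.pi_pos
  set S : Set ℕ := {n : ℕ | r ≤ lam n} with hSdef
  have hSfin : S.Finite := by
    have : Finite S := Nat.finite_of_card_ne_zero (by omega)
    exact Set.toFinite S
  set N : ℕ := Nat.card S with hNdef
  have hN3 : (3 : ℝ) ≤ (N : ℝ) := by exact_mod_cast hN
  have hNpos : (0 : ℝ) < N := by linarith
  set c := |1 - 2 * x| with hc
  set s := y ^ 2 + x * (1 - x) with hs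
  have hcnn : 0 ≤ c := abs_nonneg _
  have hsnn : 0 ≤ s := by nlinarith [sq_nonneg y, hx.1, hx.2]
  -- π/N is in (0, π/2)
  have hpiN0 : 0 < Real.pi / N := by positivity
  have hpiN2 : Real.pi / N < Real.pi / 2 := by
    apply div_lt_div_of_pos_left hpi (by norm_num) (by linarith)
  have htpos : 0 < Real.tan (Real.pi / N) :=
    Real.tan_pos_of_pos_of_lt_pi_div_two hpiN0 hpiN2
  set t := Real.tan (Real.pi / N) with ht
  -- denominators positive
  have hden : ∀ n, 0 < 1 + lam n * s := fun n => by
    have := mul_nonneg (hnn n) hsnn; linarith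
  have hterm_nonneg : ∀ n, 0 ≤ Real.arctan (lam n * y * c / (1 + lam n * s)) := fun n => by
    rw [← Real.arctan_zero]
    exact Real.arctan_strictMono.monotone
      (div_nonneg (mul_nonneg (mul_nonneg (hnn n) hy.le) hcnn) (hden n).le)
  -- summability
  have hsummable : Summable (fun n => Real.arctan (lam n * y * c / (1 + lam n * s))) := by
    refine Summable.of_nonneg_of_le hterm_nonneg ?_ (hsum.mul_right (y * c))
    · intro n
      have h1 : Real.arctan (lam n * y * c / (1 + lam n * s)) ≤ lam n * y * c / (1 + lam n * s) :=
        arctan_le_self_aux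
          (div_nonneg (mul_nonneg (mul_nonneg (hnn n) hy.le) hcnn) (hden n).le)
      have h2 : lam n * y * c / (1 + lam n * s) ≤ lam n * y * c := by
        apply div_le_self (mul_nonneg (mul_nonneg (hnn n) hy.le) hcnn)
        have := mul_nonneg (hnn n) hsnn; linarith
      calc _ ≤ _ := h1
        _ ≤ lam n * y * c := h2
        _ = lam n * (y * c) := by ring
  -- key value
  set a := Real.arctan (r * y * c / (1 + r * s)) with ha
  have hrs : 0 < 1 + r * s := by nlinarith
  have hkey : t < r * y * c / (1 + r * s) := by
    rw [lt_div_iff₀ hrs]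
    have h1 : s + 1 / r < c / t * y := by nlinarith
    have hr1 : r * (1 / r) = 1 := by field_simp
    have h5 : 1 + r * s < r * (c / t * y) := by
      have h5' := mul_lt_mul_of_pos_left h1 hr
      nlinarith [h5', hr1]
    have h6 := mul_lt_mul_of_pos_left h5 htpos
    have h7 : t * (r * (c / t * y)) = r * y * c := by
      field_simp
    exact h6.trans_eq h7
  have hπNa : Real.pi / N < a := by
    have : Real.arctan t < a := Real.arctan_strictMono hkey
    rwa [ht, Real.arctan_tan (by linarith) hpiN2] at this
  -- finite set
  set T : Finset ℕ := hSfin.toFinset with hT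
  have hTcard : T.card = N := by
    rw [hNdef, Nat.card_coe_set_eq, Set.ncard_eq_toFinset_card S hSfin]
  have hsumT : (N : ℝ) * a ≤ ∑ n ∈ T, Real.arctan (lam n * y * c / (1 + lam n * s)) := by
    have : ∀ n ∈ T, a ≤ Real.arctan (lam n * y * c / (1 + lam n * s)) := by
      intro n hn
      have hln : r ≤ lam n := by
        rw [hT, Set.Finite.mem_toFinset] at hn; exact hn
      apply Real.arctan_strictMono.monotone
      rw [div_le_div_iff₀ hrs (hden n)]
      nlinarith [mul_nonneg (mul_nonneg hy.le hcnn) (sub_nonneg.mpr hln)]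
    calc (N : ℝ) * a = ∑ _n ∈ T, a := by rw [Finset.sum_const, hTcard]; ring
      _ ≤ _ := Finset.sum_le_sum this
  have htsum : ∑ n ∈ T, Real.arctan (lam n * y * c / (1 + lam n * s)) ≤
      ∑' n, Real.arctan (lam n * y * c / (1 + lam n * s)) :=
    Summable.sum_le_tsum T (fun n _ => hterm_nonneg n) hsummable
  have : Real.pi < (N : ℝ) * a := by
    have := (div_lt_iff₀ hNpos).mp hπNa
    linarith [this]
  linarith
end

section
/- Let N ≥ 3 and let λ₁, …, λ_N be strictly positive reals and s ≤ 0 a real number. Then there exist 0 < y₁ < y₂ such that for every y ∈ (y₁, y₂), setting w := s + iy, one has ∏_{n=1}^N √(1 − 2wλₙ) = −√(∏_{n=1}^N (1 − 2wλₙ)), where √ is the principal square root. -/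
/-!
The factor `1 - 2wλₙ` lies in the right half-plane with argument `-arctan (cₙ y)`, where
`cₙ = 2λₙ / (1 - 2sλₙ) > 0`. The sum of these arguments is continuous in `y`, vanishes at `y = 0`
and tends to `-Nπ/2 ≤ -3π/2`, so it lies in `(-3π, -π)` on some interval of positive `y`. There
the principal logarithm of the product is the sum of the logarithms plus `2πi`, and halving it
produces the extra factor `exp (πi) = -1`.
-/

open Complex Finset Filter Topology
open scoped Real

theorem Complex.arg_eq_arctan_of_re_pos {z : ℂ} (hz : 0 < z.re) :
    arg z = Real.arctan (z.im / z.re) := by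
  have h := abs_arg_lt_pi_div_two_iff.mpr (Or.inl hz)
  rw [← tan_arg, Real.arctan_tan (neg_lt_of_abs_lt h) (lt_of_abs_lt h)]

theorem prod_cpow_half_eq_neg_of_sum_arg_mem {ι : Type*} {s : Finset ι} {z : ι → ℂ}
    (hz : ∀ i ∈ s, z i ≠ 0)
    (harg : ∑ i ∈ s, arg (z i) ∈ Set.Ioc (-(3 * π)) (-π)) :
    ∏ i ∈ s, z i ^ (1 / 2 : ℂ) = -((∏ i ∈ s, z i) ^ (1 / 2 : ℂ)) := by
  set S := ∑ i ∈ s, log (z i)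
  have hS : S.im = ∑ i ∈ s, arg (z i) := by simp [S, im_sum, log_im]
  have hlog : log (∏ i ∈ s, z i) = S + 2 * π * I := by
    have hexp : ∏ i ∈ s, z i = exp (S + 2 * π * I) := by
      rw [exp_add, exp_two_pi_mul_I, mul_one, exp_sum]
      exact prod_congr rfl fun i hi => (exp_log (hz i hi)).symm
    have him : (S + 2 * π * I).im = ∑ i ∈ s, arg (z i) + 2 * π := by simp [hS]
    rw [hexp, log_exp] <;> linarith [harg.1, harg.2]
  rw [cpow_def_of_ne_zero (prod_ne_zero_iff.mpr hz), hlog,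
    prod_congr rfl fun i hi => cpow_def_of_ne_zero (hz i hi) _, ← exp_sum, ← sum_mul,
    show (S + 2 * π * I) * (1 / 2) = S * (1 / 2) + π * I by ring, exp_add,
    exp_pi_mul_I]
  ring

theorem tendsto_sum_arctan_mul_atTop {ι : Type*} [Fintype ι] {c : ι → ℝ} (hc : ∀ i, 0 < c i) :
    Tendsto (fun y => ∑ i, Real.arctan (c i * y)) atTop (𝓝 (Fintype.card ι * (π / 2))) := by
  have := tendsto_finsetSum univ fun i _ =>
    (Real.tendsto_arctan_atTop.mono_right nhdsWithin_le_nhds).comp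
      (tendsto_id.const_mul_atTop (hc i))
  simpa using this

theorem exists_pos_sum_arctan_mul_eq {ι : Type*} [Fintype ι] {c : ι → ℝ} (hc : ∀ i, 0 < c i)
    {t : ℝ} (ht₀ : 0 < t) (ht : t < Fintype.card ι * (π / 2)) :
    ∃ y > 0, ∑ i, Real.arctan (c i * y) = t := by
  obtain ⟨Y, hY, hY₀⟩ :=
    (((tendsto_sum_arctan_mul_atTop hc).eventually (eventually_gt_nhds ht)).and
      (eventually_gt_atTop 0)).exists
  have hcont : Continuous fun y => ∑ i, Real.arctan (c i * y) := by fun_prop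
  obtain ⟨y, hy, hyt⟩ := intermediate_value_Ioo hY₀.le hcont.continuousOn ⟨by simpa using ht₀, hY⟩
  exact ⟨y, hy.1, hyt⟩

theorem re_one_sub_two_mul_mul (s y l : ℝ) :
    (1 - 2 * ((s : ℂ) + y * I) * l).re = 1 - 2 * s * l := by
  simp

theorem im_one_sub_two_mul_mul (s y l : ℝ) :
    (1 - 2 * ((s : ℂ) + y * I) * l).im = -(2 * y * l) := by
  simp [mul_comm]

theorem arg_one_sub_two_mul_mul {s l : ℝ} (y : ℝ) (h : 0 < 1 - 2 * s * l) :
    arg (1 - 2 * ((s : ℂ) + y * I) * l) = -Real.arctan (2 * l / (1 - 2 * s * l) * y) := by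
  rw [arg_eq_arctan_of_re_pos ((re_one_sub_two_mul_mul s y l).symm ▸ h),
    re_one_sub_two_mul_mul, im_one_sub_two_mul_mul, ← Real.arctan_neg]
  congr 1
  ring

/-- For `N ≥ 3`, strictly positive `λ₁, …, λ_N` and `s ≤ 0`, there exist
`0 < y₁ < y₂` such that for every `y ∈ (y₁, y₂)`, setting `w := s + iy`, the principal
square roots satisfy `∏ₙ √(1 − 2wλₙ) = −√(∏ₙ (1 − 2wλₙ))`. -/
theorem stmt9 (N : ℕ) (hN : 3 ≤ N) (lam : Fin N → ℝ) (hlam : ∀ n, 0 < lam n)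
    (s : ℝ) (hs : s ≤ 0) :
    ∃ y₁ y₂ : ℝ, 0 < y₁ ∧ y₁ < y₂ ∧
      ∀ y ∈ Set.Ioo y₁ y₂,
        (∏ n, (1 - 2 * ((s : ℂ) + (y : ℂ) * Complex.I) * (lam n : ℂ)) ^ (1 / 2 : ℂ))
          = -((∏ n, (1 - 2 * ((s : ℂ) + (y : ℂ) * Complex.I) * (lam n : ℂ))) ^ (1 / 2 : ℂ)) := by
  have hre : ∀ n, 0 < 1 - 2 * s * lam n := fun n => by nlinarith [hlam n]
  have hc : ∀ n, 0 < 2 * lam n / (1 - 2 * s * lam n) := fun n => by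
    have := hlam n; have := hre n; positivity
  obtain ⟨y₀, hy₀, hsum₀⟩ := exists_pos_sum_arctan_mul_eq hc (t := 5 * π / 4)
    (by positivity) (by
      rw [Fintype.card_fin]
      have h3 : (3 : ℝ) ≤ N := by exact_mod_cast hN
      nlinarith [mul_le_mul_of_nonneg_right h3 Real.pi_pos.le, Real.pi_pos])
  have hnhds : (fun y => ∑ n, Real.arctan (2 * lam n / (1 - 2 * s * lam n) * y)) ⁻¹'
      Set.Ioo π (3 * π) ∈ 𝓝[>] y₀ := by
    refine nhdsWithin_le_nhds ((by fun_prop : Continuous _).continuousAt.preimage_mem_nhds ?_)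
    exact Ioo_mem_nhds (by linarith [Real.pi_pos]) (by linarith [Real.pi_pos])
  obtain ⟨y₂, hy₂, hIoo⟩ := mem_nhdsGT_iff_exists_Ioo_subset.mp hnhds
  refine ⟨y₀, y₂, hy₀, hy₂, fun y hy => prod_cpow_half_eq_neg_of_sum_arg_mem (fun n _ h => ?_) ?_⟩
  · have hre₀ := congrArg re h
    rw [re_one_sub_two_mul_mul, zero_re] at hre₀
    exact (hre n).ne' hre₀
  · rw [sum_congr rfl fun n _ => arg_one_sub_two_mul_mul y (hre n), sum_neg_distrib]
    obtain ⟨hlo, hhi⟩ := hIoo hy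
    exact ⟨by linarith, by linarith⟩
end

section
/- Let T > 0, n ≥ 1, ν ∈ ℝ, and let K : [0,T]² → ℝ be a Volterra kernel such that K(t,·) ∈ L²([0,T]) for every t ∈ [0,T]. Set t_j := jT/n for 0 ≤ j ≤ n, and define real n×n matrices (indexed by 0 ≤ j, k ≤ n−1) by (K_n)_{jk} := ∫_{t_k}^{t_{k+1}} K(t_j, s) ds and (Σ_n)_{jk} := ν² ∫₀ᵀ K(t_j, s)·K(t_k, s) ds. Then the matrix (T/n)·Σ_n − ν²·K_n·K_nᵀ is positive semidefinite. -/
open MeasureTheory Matrix intervalIntegral ENNReal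

lemma cs_aux {f : ℝ → ℝ} {a b : ℝ} (hab : a ≤ b)
    (hf : IntegrableOn f (Set.Ioc a b)) (hf2 : IntegrableOn (fun s => f s ^ 2) (Set.Ioc a b)) :
    (∫ s in Set.Ioc a b, f s) ^ 2 ≤ (b - a) * ∫ s in Set.Ioc a b, f s ^ 2 := by
  rcases eq_or_lt_of_le hab with rfl | hlt
  · simp
  have hb : 0 < b - a := by linarith
  set μ := volume.restrict (Set.Ioc a b) with hμ
  set I := ∫ s, f s ∂μ with hI
  set J := ∫ s, f s ^ 2 ∂μ with hJ
  set c := I / (b - a) with hc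
  have expand : ∀ s : ℝ, (f s - c) ^ 2 = f s ^ 2 - 2 * c * f s + c ^ 2 := by intro s; ring
  have hμconst : ∀ d : ℝ, ∫ _ : ℝ, d ∂μ = (b - a) * d := by
    intro d
    rw [hμ, setIntegral_const, Real.volume_real_Ioc_of_le hab, smul_eq_mul]
  have h1 : Integrable (fun s => f s ^ 2 - 2 * c * f s) μ := hf2.sub (hf.const_mul (2 * c))
  have hval : ∫ s, (f s - c) ^ 2 ∂μ = J - 2 * c * I + (b - a) * c ^ 2 := by
    simp_rw [expand]
    rw [integral_add h1 (integrable_const _), integral_sub hf2 (hf.const_mul (2 * c)),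
      MeasureTheory.integral_const_mul, hμconst]
  have hnn : 0 ≤ J - 2 * c * I + (b - a) * c ^ 2 := by
    rw [← hval]; exact integral_nonneg fun s => sq_nonneg _
  have e : J - 2 * c * I + (b - a) * c ^ 2 = J - I ^ 2 / (b - a) := by
    rw [hc]; field_simp; ring
  rw [e] at hnn
  rw [mul_comm, ← div_le_iff₀ hb]
  linarith

lemma alg_quad {n : ℕ} (x : Fin n → ℝ) (c : Fin n → Fin n → ℝ) :
    (∑ j, x j * ∑ l, (∑ k, c j k * c l k) * x l) = ∑ k, (∑ j, x j * c j k) ^ 2 := by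
  have h : ∀ k : Fin n, (∑ j, x j * c j k) ^ 2
      = ∑ j, ∑ l, (x j * c j k) * (x l * c l k) := fun k => by
    rw [sq, Finset.sum_mul_sum]
  simp_rw [h]
  rw [Finset.sum_comm]
  refine Finset.sum_congr rfl fun j _ => ?_
  rw [Finset.mul_sum, Finset.sum_comm]
  refine Finset.sum_congr rfl fun l _ => ?_
  rw [Finset.sum_mul, Finset.mul_sum]
  exact Finset.sum_congr rfl fun k _ => by ring

/-- For a Volterra kernel `K` on `[0,T]²` (measurable, square integrable,
`K t s = 0` for `s ≥ t`) with `K(t,·) ∈ L²([0,T])` for every `t`, and the discretized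
matrices `(K_n)_{jk} = ∫_{t_k}^{t_{k+1}} K(t_j, s) ds` and
`(Σ_n)_{jk} = ν² ∫₀ᵀ K(t_j, s) K(t_k, s) ds` with `t_j = jT/n`, the matrix
`(T/n) Σ_n − ν² K_n K_nᵀ` is positive semidefinite. -/
theorem stmt13 (T : ℝ) (hT : 0 < T) (n : ℕ) (hn : 1 ≤ n) (ν : ℝ) (K : ℝ → ℝ → ℝ)
    (hKmeas : Measurable (fun p : ℝ × ℝ => K p.1 p.2))
    (hKL2 : MemLp (fun p : ℝ × ℝ => K p.1 p.2) 2
      (volume.restrict (Set.Icc 0 T ×ˢ Set.Icc 0 T)))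
    (hVolterra : ∀ t s : ℝ, t ≤ s → K t s = 0)
    (hKtL2 : ∀ t : ℝ, t ∈ Set.Icc 0 T → MemLp (K t) 2 (volume.restrict (Set.Icc 0 T))) :
    Matrix.PosSemidef
      ((T / n) •
          (Matrix.of fun j k : Fin n =>
            ν ^ 2 * ∫ s in (0 : ℝ)..T, K ((j : ℕ) * T / n) s * K ((k : ℕ) * T / n) s)
        - ν ^ 2 •
          ((Matrix.of fun j k : Fin n =>
              ∫ s in ((k : ℕ) * T / n)..(((k : ℕ) + 1) * T / n), K ((j : ℕ) * T / n) s)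
            * (Matrix.of fun j k : Fin n =>
              ∫ s in ((k : ℕ) * T / n)..(((k : ℕ) + 1) * T / n), K ((j : ℕ) * T / n) s)ᵀ)) := by
  have hn' : (0 : ℝ) < n := by exact_mod_cast Nat.pos_of_ne_zero (by omega)
  -- basic facts about the grid
  have hmemj : ∀ j : Fin n, ((j : ℕ) : ℝ) * T / n ∈ Set.Icc (0:ℝ) T := by
    intro j
    constructor
    · positivity
    · rw [div_le_iff₀ hn']
      have : ((j : ℕ) : ℝ) ≤ n := by exact_mod_cast (j.isLt.le)
      nlinarith
  haveI : IsFiniteMeasure (volume.restrict (Set.Icc (0:ℝ) T)) := by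
    constructor
    rw [Measure.restrict_apply_univ, Real.volume_Icc]
    exact ENNReal.ofReal_lt_top
  have hg : ∀ j : Fin n, MemLp (K (((j : ℕ) : ℝ) * T / n)) 2 (volume.restrict (Set.Icc 0 T)) :=
    fun j => hKtL2 _ (hmemj j)
  have hgint : ∀ j : Fin n, IntegrableOn (K (((j : ℕ) : ℝ) * T / n)) (Set.Icc 0 T) :=
    fun j => (hg j).integrable one_le_two
  have hpqr : (1 : ℝ≥0∞) / 1 = 1 / 2 + 1 / 2 := by
    rw [ENNReal.div_add_div_same, one_add_one_eq_two, ENNReal.div_self two_ne_zero ENNReal.ofNat_ne_top, one_div_one]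
  have hprod : ∀ j k : Fin n, IntegrableOn
      (fun s => K (((j : ℕ) : ℝ) * T / n) s * K (((k : ℕ) : ℝ) * T / n) s) (Set.Icc 0 T) := by
    intro j k
    have := memLp_one_iff_integrable.mp ((hg k).smul (hg j) (r := 1))
    exact this
  refine Matrix.posSemidef_iff_dotProduct_mulVec.mpr ⟨?_, ?_⟩
  · -- Hermitian part
    show _ᴴ = _
    rw [Matrix.conjTranspose_eq_transpose_of_trivial, Matrix.transpose_sub,
      Matrix.transpose_smul, Matrix.transpose_smul, Matrix.transpose_mul,
      Matrix.transpose_transpose]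
    congr 1
    congr 1
    ext j k
    simp only [Matrix.transpose_apply, Matrix.of_apply]
    congr 1
    exact intervalIntegral.integral_congr fun s _ => mul_comm _ _
  · intro x
    rw [star_trivial]
    set f : ℝ → ℝ := fun s => ∑ j : Fin n, x j * K (((j : ℕ) : ℝ) * T / n) s with hf
    have hfL2 : MemLp f 2 (volume.restrict (Set.Icc 0 T)) :=
      memLp_finsetSum Finset.univ fun j _ => (hg j).const_mul (x j)
    have hfsq : IntegrableOn (fun s => f s ^ 2) (Set.Icc 0 T) := hfL2.integrable_sq
    have hfint : IntegrableOn f (Set.Icc 0 T) := hfL2.integrable one_le_two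
    have hle' : ∀ k : ℕ, (k : ℝ) * T / n ≤ ((k : ℝ) + 1) * T / n := by
      intro k
      have h1 : (k : ℝ) * T ≤ ((k : ℝ) + 1) * T := by nlinarith [hT.le]
      exact div_le_div_of_nonneg_right h1 hn'.le |>.trans_eq rfl
    have hsub' : ∀ k : ℕ, k < n → Set.Ioc ((k : ℝ) * T / n) (((k : ℝ) + 1) * T / n)
        ⊆ Set.Icc (0:ℝ) T := by
      intro k hk s hs
      have h0 : (0:ℝ) ≤ (k : ℝ) * T / n := by positivity
      have h1 : ((k : ℝ) + 1) * T / n ≤ T := by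
        rw [div_le_iff₀ hn']
        have : (k : ℝ) + 1 ≤ n := by exact_mod_cast hk
        nlinarith
      exact ⟨by linarith [hs.1], by linarith [hs.2]⟩
    -- eqA
    have eqA : x ⬝ᵥ ((Matrix.of fun j k : Fin n =>
          ν ^ 2 * ∫ s in (0 : ℝ)..T, K ((j : ℕ) * T / n) s * K ((k : ℕ) * T / n) s) *ᵥ x)
        = ν ^ 2 * ∫ s in Set.Ioc (0:ℝ) T, f s ^ 2 := by
      have hexp : ∀ s : ℝ, f s ^ 2 = ∑ p : Fin n × Fin n,
          (x p.1 * x p.2) * (K (((p.1 : ℕ) : ℝ) * T / n) s * K (((p.2 : ℕ) : ℝ) * T / n) s) := by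
        intro s
        simp only [hf]
        rw [sq, Finset.sum_mul_sum, Fintype.sum_prod_type]
        exact Finset.sum_congr rfl fun j _ => Finset.sum_congr rfl fun k _ => by ring
      simp_rw [hexp]
      rw [MeasureTheory.integral_finset_sum _ (fun p _ =>
        ((hprod p.1 p.2).mono_set Set.Ioc_subset_Icc_self).const_mul (x p.1 * x p.2))]
      simp_rw [MeasureTheory.integral_const_mul]
      rw [Fintype.sum_prod_type]
      simp only [Matrix.mulVec, dotProduct, Matrix.of_apply,
        intervalIntegral.integral_of_le hT.le, Finset.mul_sum]
      exact Finset.sum_congr rfl fun j _ => Finset.sum_congr rfl fun k _ => by ring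
    -- eqB
    have hfIk : ∀ k : Fin n, ∫ s in Set.Ioc (((k : ℕ) : ℝ) * T / n) ((((k : ℕ) : ℝ) + 1) * T / n), f s
        = ∑ j : Fin n, x j * ∫ s in Set.Ioc (((k : ℕ) : ℝ) * T / n) ((((k : ℕ) : ℝ) + 1) * T / n),
            K (((j : ℕ) : ℝ) * T / n) s := by
      intro k
      simp only [hf]
      rw [MeasureTheory.integral_finset_sum _ (fun j _ =>
        ((hgint j).mono_set (hsub' k k.isLt)).const_mul (x j))]
      simp_rw [MeasureTheory.integral_const_mul]
    have eqB : x ⬝ᵥ (((Matrix.of fun j k : Fin n =>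
          ∫ s in ((k : ℕ) * T / n)..(((k : ℕ) + 1) * T / n), K ((j : ℕ) * T / n) s)
        * (Matrix.of fun j k : Fin n =>
          ∫ s in ((k : ℕ) * T / n)..(((k : ℕ) + 1) * T / n), K ((j : ℕ) * T / n) s)ᵀ) *ᵥ x)
        = ∑ k : Fin n, (∫ s in Set.Ioc (((k : ℕ) : ℝ) * T / n) ((((k : ℕ) : ℝ) + 1) * T / n), f s) ^ 2 := by
      have hIoc2 : ∀ j k : Fin n, (∫ s in (((k : ℕ) : ℝ) * T / n)..((((k : ℕ) : ℝ) + 1) * T / n),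
          K (((j : ℕ) : ℝ) * T / n) s)
          = ∫ s in Set.Ioc (((k : ℕ) : ℝ) * T / n) ((((k : ℕ) : ℝ) + 1) * T / n),
              K (((j : ℕ) : ℝ) * T / n) s :=
        fun j k => intervalIntegral.integral_of_le (hle' k)
      simp only [Matrix.mulVec, dotProduct, Matrix.mul_apply, Matrix.transpose_apply,
        Matrix.of_apply, hIoc2, hfIk]
      exact alg_quad x _
    rw [Matrix.sub_mulVec, Matrix.smul_mulVec, Matrix.smul_mulVec,
      dotProduct_sub, dotProduct_smul, dotProduct_smul, smul_eq_mul, smul_eq_mul, eqA, eqB]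
    -- split the integral over [0,T] into subintervals
    have hsplit : ∫ s in Set.Ioc (0:ℝ) T, f s ^ 2
        = ∑ k : Fin n, ∫ s in Set.Ioc (((k : ℕ) : ℝ) * T / n) ((((k : ℕ) : ℝ) + 1) * T / n), f s ^ 2 := by
      have hint : ∀ k : ℕ, k < n → IntervalIntegrable (fun s => f s ^ 2) volume
          ((k : ℝ) * T / n) (((k + 1 : ℕ) : ℝ) * T / n) := by
        intro k hk
        have hc : ((k + 1 : ℕ) : ℝ) = (k : ℝ) + 1 := by push_cast; ring
        rw [hc]
        rw [intervalIntegrable_iff, Set.uIoc_of_le (hle' k)]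
        exact hfsq.mono_set (hsub' k hk)
      have hadj := intervalIntegral.sum_integral_adjacent_intervals
        (a := fun i : ℕ => (i : ℝ) * T / n) (f := fun s => f s ^ 2) (μ := volume) (n := n) hint
      have h0 : ((0 : ℕ) : ℝ) * T / n = 0 := by simp
      have hN : ((n : ℕ) : ℝ) * T / n = T := by field_simp
      rw [h0, hN] at hadj
      rw [Fin.sum_univ_eq_sum_range
        (fun k : ℕ => ∫ s in Set.Ioc ((k : ℝ) * T / n) (((k : ℝ) + 1) * T / n), f s ^ 2)]
      rw [← intervalIntegral.integral_of_le hT.le, ← hadj]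
      refine Finset.sum_congr rfl fun k _ => ?_
      have hc : ((k + 1 : ℕ) : ℝ) = (k : ℝ) + 1 := by push_cast; ring
      rw [hc, intervalIntegral.integral_of_le (hle' k)]
    have hkle : ∀ k : Fin n,
        (∫ s in Set.Ioc (((k : ℕ) : ℝ) * T / n) ((((k : ℕ) : ℝ) + 1) * T / n), f s) ^ 2
        ≤ (T / n) * ∫ s in Set.Ioc (((k : ℕ) : ℝ) * T / n) ((((k : ℕ) : ℝ) + 1) * T / n), f s ^ 2 := by
      intro k
      have h := cs_aux (hle' (k : ℕ)) (hfint.mono_set (hsub' (k : ℕ) k.isLt))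
        (hfsq.mono_set (hsub' (k : ℕ) k.isLt))
      have e : (((k : ℕ) : ℝ) + 1) * T / n - ((k : ℕ) : ℝ) * T / n = T / n := by ring
      rwa [e] at h
    have hsum : ∑ k : Fin n,
        (∫ s in Set.Ioc (((k : ℕ) : ℝ) * T / n) ((((k : ℕ) : ℝ) + 1) * T / n), f s) ^ 2
        ≤ (T / n) * ∫ s in Set.Ioc (0:ℝ) T, f s ^ 2 := by
      calc _ ≤ ∑ k : Fin n, (T / n) *
            ∫ s in Set.Ioc (((k : ℕ) : ℝ) * T / n) ((((k : ℕ) : ℝ) + 1) * T / n), f s ^ 2 :=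
          Finset.sum_le_sum fun k _ => hkle k
        _ = (T / n) * ∫ s in Set.Ioc (0:ℝ) T, f s ^ 2 := by rw [← Finset.mul_sum, hsplit]
    have e2 : ν ^ 2 * ((T / n) * (∫ s in Set.Ioc (0:ℝ) T, f s ^ 2)
        - ∑ k : Fin n, (∫ s in Set.Ioc (((k : ℕ) : ℝ) * T / n) ((((k : ℕ) : ℝ) + 1) * T / n), f s) ^ 2)
        = T / n * (ν ^ 2 * ∫ s in Set.Ioc (0:ℝ) T, f s ^ 2)
        - ν ^ 2 * ∑ k : Fin n, (∫ s in Set.Ioc (((k : ℕ) : ℝ) * T / n) ((((k : ℕ) : ℝ) + 1) * T / n), f s) ^ 2 := by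
      ring
    have := mul_nonneg (sq_nonneg ν) (sub_nonneg.2 hsum)
    linarith [e2 ▸ this]
end

section
/- Let n ≥ 1, c > 0, ν ∈ ℝ, ρ ∈ [−1,1]. Let K be a real n×n strictly lower triangular matrix and Σ a real symmetric positive semidefinite n×n matrix such that c·Σ − ν²·K·Kᵀ is positive semidefinite. Let u, w ∈ ℂ with 0 ≤ Re(u) ≤ 1 and Re(w) ≤ 0, and set a := w + (u² − u)/2, b := ρνu, and Φ := I − b(K + Kᵀ) + b²·K·Kᵀ − 2ac·Σ (an n×n complex matrix, with K, Kᵀ, Σ viewed as complex matrices). Then (Φ + Φ*)/2 and (Φ − Φ*)/(2i) are Hermitian, (Φ + Φ*)/2 equals the real matrix (I − Re(b)K)(I − Re(b)Kᵀ) − Im(b)²·K·Kᵀ − 2Re(a)c·Σ, and this matrix is positive definite. -/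
open Matrix

private lemma aux_mapconjT {n : ℕ} (K : Matrix (Fin n) (Fin n) ℝ) :
    (K.map Complex.ofReal)ᴴ = Kᵀ.map Complex.ofReal := by
  ext i j; simp [conjTranspose_apply, Complex.conj_ofReal]

private lemma aux_mapT {n : ℕ} (K : Matrix (Fin n) (Fin n) ℝ) :
    (Kᵀ).map Complex.ofReal = (K.map Complex.ofReal)ᵀ := by
  ext i j; simp

private lemma aux_mapadd {n : ℕ} (A B : Matrix (Fin n) (Fin n) ℝ) :
    (A + B).map Complex.ofReal = A.map Complex.ofReal + B.map Complex.ofReal := by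
  ext i j; simp

private lemma aux_mapsub {n : ℕ} (A B : Matrix (Fin n) (Fin n) ℝ) :
    (A - B).map Complex.ofReal = A.map Complex.ofReal - B.map Complex.ofReal := by
  ext i j; simp

private lemma aux_mapmul {n : ℕ} (A B : Matrix (Fin n) (Fin n) ℝ) :
    (A * B).map Complex.ofReal = A.map Complex.ofReal * B.map Complex.ofReal := by
  ext i j; simp [Matrix.mul_apply]

private lemma aux_mapone {n : ℕ} : ((1 : Matrix (Fin n) (Fin n) ℝ)).map Complex.ofReal = 1 := by
  ext i j; simp [Matrix.one_apply]; split <;> simp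

private lemma aux_mapsmul {n : ℕ} (r : ℝ) (A : Matrix (Fin n) (Fin n) ℝ) :
    (r • A).map Complex.ofReal = (r : ℂ) • A.map Complex.ofReal := by
  ext i j; simp

private lemma aux_psd_smul {n : ℕ} {M : Matrix (Fin n) (Fin n) ℝ} (h : M.PosSemidef)
    {r : ℝ} (hr : 0 ≤ r) : (r • M).PosSemidef := by
  refine posSemidef_iff_dotProduct_mulVec.2 ⟨?_, fun x => ?_⟩
  · unfold Matrix.IsHermitian
    rw [conjTranspose_smul, star_trivial, h.1.eq]
  · rw [smul_mulVec, dotProduct_smul, smul_eq_mul]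
    exact mul_nonneg hr (h.dotProduct_mulVec_nonneg x)

private lemma aux_posdef_mul_transpose {n : ℕ} (A : Matrix (Fin n) (Fin n) ℝ)
    (hA : IsUnit A.det) : (A * Aᵀ).PosDef := by
  refine posDef_iff_dotProduct_mulVec.2 ⟨?_, fun x hx => ?_⟩
  · ext i j
    simp [conjTranspose_apply, Matrix.mul_apply, mul_comm]
  · have hinj : Function.Injective (Aᵀ.mulVec) :=
      Matrix.mulVec_injective_iff_isUnit.2 ((Matrix.isUnit_iff_isUnit_det Aᵀ).2 (isUnit_det_transpose A hA))
    have hv : Aᵀ *ᵥ x ≠ 0 := by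
      intro h
      exact hx (hinj (by simpa using h))
    have : x ⬝ᵥ (A * Aᵀ) *ᵥ x = (Aᵀ *ᵥ x) ⬝ᵥ (Aᵀ *ᵥ x) := by
      rw [← mulVec_mulVec, dotProduct_mulVec, ← Matrix.mulVec_transpose]
    rw [star_trivial, this]
    have := dotProduct_star_self_pos_iff (R := ℝ) (v := Aᵀ *ᵥ x)
    rw [star_trivial] at this
    exact this.2 hv

/-- With `K` strictly lower triangular real, `Σ` real symmetric PSD with
`cΣ − ν²KKᵀ ⪰ 0`, `0 ≤ Re u ≤ 1`, `Re w ≤ 0`, `a := w + (u² − u)/2`, `b := ρνu` and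
`Φ := I − b(K + Kᵀ) + b²KKᵀ − 2acΣ`, the matrices `(Φ + Φ*)/2` and `(Φ − Φ*)/(2i)` are
Hermitian, `(Φ + Φ*)/2` equals the real matrix
`(I − Re(b)K)(I − Re(b)Kᵀ) − Im(b)²KKᵀ − 2Re(a)cΣ`, and the latter is positive
definite. -/
theorem stmt14 (n : ℕ) (hn : 1 ≤ n) (c : ℝ) (hc : 0 < c) (ν ρ : ℝ)
    (hρ : ρ ∈ Set.Icc (-1 : ℝ) 1)
    (K S : Matrix (Fin n) (Fin n) ℝ)
    (hK : ∀ i j : Fin n, i ≤ j → K i j = 0)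
    (hS : S.PosSemidef)
    (hSchur : (c • S - ν ^ 2 • (K * Kᵀ)).PosSemidef)
    (u w : ℂ) (hu0 : 0 ≤ u.re) (hu1 : u.re ≤ 1) (hw : w.re ≤ 0)
    (a b : ℂ) (ha : a = w + (u ^ 2 - u) / 2) (hb : b = (ρ : ℂ) * (ν : ℂ) * u)
    (Φ : Matrix (Fin n) (Fin n) ℂ)
    (hΦ : Φ = 1 - b • (K.map Complex.ofReal + (K.map Complex.ofReal)ᵀ)
        + b ^ 2 • (K.map Complex.ofReal * (K.map Complex.ofReal)ᵀ)
        - (2 * a * (c : ℂ)) • (S.map Complex.ofReal)) :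
    ((1 / 2 : ℂ) • (Φ + Φᴴ)).IsHermitian ∧
    ((2 * Complex.I)⁻¹ • (Φ - Φᴴ)).IsHermitian ∧
    (1 / 2 : ℂ) • (Φ + Φᴴ)
      = ((1 - b.re • K) * (1 - b.re • Kᵀ) - b.im ^ 2 • (K * Kᵀ)
          - (2 * a.re * c) • S).map Complex.ofReal ∧
    ((1 - b.re • K) * (1 - b.re • Kᵀ) - b.im ^ 2 • (K * Kᵀ)
      - (2 * a.re * c) • S).PosDef := by
  have h1 : ((1 / 2 : ℂ) • (Φ + Φᴴ)).IsHermitian := by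
    unfold Matrix.IsHermitian
    rw [conjTranspose_smul, conjTranspose_add, conjTranspose_conjTranspose]
    rw [show star (1/2 : ℂ) = 1/2 by simp, add_comm]
  have h2 : ((2 * Complex.I)⁻¹ • (Φ - Φᴴ)).IsHermitian := by
    unfold Matrix.IsHermitian
    rw [conjTranspose_smul, conjTranspose_sub, conjTranspose_conjTranspose]
    rw [show star ((2 * Complex.I)⁻¹) = -(2 * Complex.I)⁻¹ by
      rw [star_inv₀, show star (2 * Complex.I) = -(2 * Complex.I) from by
        simp [Complex.star_def, Complex.conj_I], inv_neg]]
    rw [neg_smul, ← smul_neg, neg_sub]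
  -- the real symmetric part
  set Kc := K.map Complex.ofReal with hKc
  set Sc := S.map Complex.ofReal with hSc
  have hScH : Scᴴ = Sc := by
    ext i j
    have := congrFun (congrFun hS.1.eq i) j
    simp only [conjTranspose_apply] at this ⊢
    simp [hSc, Complex.conj_ofReal, ← this]
  have hPhiH : Φᴴ = 1 - (starRingEnd ℂ) b • (Kc + Kcᵀ)
      + ((starRingEnd ℂ) b) ^ 2 • (Kc * Kcᵀ) - (2 * (starRingEnd ℂ) a * (c : ℂ)) • Sc := by
    have hK1 : Kcᴴ = Kcᵀ := by rw [hKc, aux_mapconjT, aux_mapT]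
    have hK2 : (Kcᵀ)ᴴ = Kc := by
      ext i j; simp [conjTranspose_apply, hKc, Complex.conj_ofReal]
    rw [hΦ]
    simp only [conjTranspose_sub, conjTranspose_add, conjTranspose_smul, conjTranspose_one,
      conjTranspose_mul, hK1, hK2, hScH, Complex.star_def, _root_.map_mul, map_ofNat, map_pow,
      Complex.conj_ofReal]
    module
  -- scalar computations
  have hadd_b : b + (starRingEnd ℂ) b = 2 * (b.re : ℂ) := by
    rw [Complex.add_conj]; push_cast; ring
  have hadd_b2 : b ^ 2 + ((starRingEnd ℂ) b) ^ 2 = 2 * ((b.re ^ 2 - b.im ^ 2 : ℝ) : ℂ) := by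
    rw [← map_pow, Complex.add_conj]
    have hre : (b ^ 2).re = b.re ^ 2 - b.im ^ 2 := by rw [pow_two, Complex.mul_re]; ring
    rw [hre]; push_cast; ring
  have hadd_a : a + (starRingEnd ℂ) a = 2 * (a.re : ℂ) := by
    rw [Complex.add_conj]; push_cast; ring
  have heq : (1 / 2 : ℂ) • (Φ + Φᴴ)
      = ((1 - b.re • K) * (1 - b.re • Kᵀ) - b.im ^ 2 • (K * Kᵀ)
          - (2 * a.re * c) • S).map Complex.ofReal := by
    have expand : (1 - b.re • K) * (1 - b.re • Kᵀ)
        = 1 - b.re • (K + Kᵀ) + (b.re ^ 2) • (K * Kᵀ) := by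
      simp only [sub_mul, mul_sub, one_mul, mul_one, Matrix.smul_mul, Matrix.mul_smul, smul_smul,
        smul_add, pow_two]
      abel
    rw [expand]
    simp only [aux_mapsub, aux_mapadd, aux_mapsmul, aux_mapmul, aux_mapone, aux_mapT]
    rw [← hKc, ← hSc]
    rw [hPhiH, hΦ]
    have : (1 : Matrix (Fin n) (Fin n) ℂ) - b • (Kc + Kcᵀ) + b ^ 2 • (Kc * Kcᵀ)
          - (2 * a * (c : ℂ)) • Sc
        + (1 - (starRingEnd ℂ) b • (Kc + Kcᵀ) + ((starRingEnd ℂ) b) ^ 2 • (Kc * Kcᵀ)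
          - (2 * (starRingEnd ℂ) a * (c : ℂ)) • Sc)
        = 2 • (1 : Matrix (Fin n) (Fin n) ℂ)
          - (b + (starRingEnd ℂ) b) • (Kc + Kcᵀ)
          + (b ^ 2 + ((starRingEnd ℂ) b) ^ 2) • (Kc * Kcᵀ)
          - (((a + (starRingEnd ℂ) a)) * (2 * (c:ℂ))) • Sc := by
      module
    rw [this, hadd_b, hadd_b2, hadd_a]
    push_cast
    module
  refine ⟨h1, h2, heq, ?_⟩
  -- positive definiteness
  have hbre : b.re = ρ * ν * u.re := by
    rw [hb]; simp [Complex.mul_re, Complex.mul_im]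
  have hbim : b.im = ρ * ν * u.im := by
    rw [hb]; simp [Complex.mul_re, Complex.mul_im]
  have haRe : a.re = w.re + (u.re ^ 2 - u.im ^ 2 - u.re) / 2 := by
    rw [ha]
    simp [Complex.add_re, Complex.div_re, Complex.sub_re, Complex.normSq, pow_two,
      Complex.mul_re, Complex.mul_im]
    try ring
  have hρ2 : ρ ^ 2 ≤ 1 := by nlinarith [hρ.1, hρ.2]
  have key : (1 - b.re • K) * (1 - b.re • Kᵀ) - b.im ^ 2 • (K * Kᵀ) - (2 * a.re * c) • S
      = (1 - b.re • K) * (1 - b.re • K)ᵀ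
        + ((-2 * a.re - ρ ^ 2 * u.im ^ 2) * c) • S
        + (ρ ^ 2 * u.im ^ 2) • (c • S - ν ^ 2 • (K * Kᵀ)) := by
    have hT : (1 - b.re • K)ᵀ = 1 - b.re • Kᵀ := by
      rw [transpose_sub, transpose_one, transpose_smul]
    rw [hT, hbim]
    module
  rw [key]
  have hdet : IsUnit (1 - b.re • K).det := by
    have hBT : (1 - b.re • K).BlockTriangular OrderDual.toDual := by
      intro i j hij
      have hij' : (i : Fin n) < j := hij
      simp [Matrix.one_apply_ne (ne_of_lt hij'), hK i j hij'.le]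
    rw [Matrix.det_of_lowerTriangular _ hBT]
    have : ∀ i : Fin n, (1 - b.re • K) i i = 1 := by
      intro i
      simp [Matrix.one_apply, hK i i le_rfl]
    rw [Finset.prod_congr rfl (fun i _ => this i), Finset.prod_const_one]
    exact isUnit_one
  have hPD := aux_posdef_mul_transpose _ hdet
  have hPSD1 : (((-2 * a.re - ρ ^ 2 * u.im ^ 2) * c) • S).PosSemidef := by
    refine aux_psd_smul hS (mul_nonneg ?_ hc.le)
    rw [haRe]
    nlinarith [mul_nonneg hu0 (sub_nonneg.2 hu1), sq_nonneg u.im,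
      mul_nonneg (sub_nonneg.2 hρ2) (sq_nonneg u.im)]
  have hPSD2 : ((ρ ^ 2 * u.im ^ 2) • (c • S - ν ^ 2 • (K * Kᵀ))).PosSemidef :=
    aux_psd_smul hSchur (mul_nonneg (sq_nonneg ρ) (sq_nonneg u.im))
  exact (hPD.add_posSemidef hPSD1).add_posSemidef hPSD2
end

section
/- Let n ≥ 1 and let R, S be n×n complex matrices with R Hermitian positive definite and S Hermitian. Let R^{1/2} denote the unique Hermitian positive semidefinite square root of R, let Q := (R^{1/2})⁻¹ · S · (R^{1/2})⁻¹, and let μ₁, …, μₙ ∈ ℝ be the eigenvalues of the Hermitian matrix Q, counted with multiplicity. Then det(R) is a positive real number, m := (Arg(∏_{k=1}^n (1 + i·μₖ)) − ∑_{k=1}^n Arg(1 + i·μₖ))/(2π) is an integer, and √(det(R + i·S)) = e^{iπm} · √(det R) · ∏_{k=1}^n √(1 + i·μₖ), where √ is the principal square root. -/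
open Matrix Finset ComplexOrder

/-- The old `Matrix.PosSemidef.sqrt` (removed from Mathlib), with its original definition. -/
noncomputable def posSemidefSqrtOld {n 𝕜 : Type*} [Fintype n] [DecidableEq n] [RCLike 𝕜]
    {A : Matrix n n 𝕜} (hA : A.PosSemidef) : Matrix n n 𝕜 :=
  hA.1.eigenvectorUnitary.1 * diagonal ((↑) ∘ (√·) ∘ hA.1.eigenvalues) *
    (star hA.1.eigenvectorUnitary : Matrix n n 𝕜)

lemma scalar_int {ι : Type*} [Fintype ι] (f : ι → ℂ) (hf : ∀ k, f k ≠ 0) :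
    ∃ m : ℤ, ((∏ k, f k).arg : ℝ) - ∑ k, (f k).arg = 2 * Real.pi * m := by
  set P := ∏ k, f k with hP
  have hPne : P ≠ 0 := Finset.prod_ne_zero_iff.2 fun k _ => hf k
  have h1 : ((‖P‖ : ℝ) : ℂ) * Complex.exp ((P.arg : ℂ) * Complex.I) = P :=
    Complex.norm_mul_exp_arg_mul_I P
  have h2 : ((‖P‖ : ℝ) : ℂ) * Complex.exp ((∑ k, (f k).arg : ℝ) * Complex.I) = P := by
    have e1 : ∏ k, (((‖f k‖ : ℝ) : ℂ) * Complex.exp ((f k).arg * Complex.I)) = P := by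
      rw [hP]; exact Finset.prod_congr rfl fun k _ => Complex.norm_mul_exp_arg_mul_I (f k)
    conv_rhs => rw [← e1]
    rw [Finset.prod_mul_distrib, ← Complex.exp_sum]
    congr 1
    · rw [hP, norm_prod]; push_cast; ring
    · push_cast; rw [Finset.sum_mul]
  have habs : ((‖P‖ : ℝ) : ℂ) ≠ 0 := by
    exact_mod_cast (norm_ne_zero_iff.2 hPne)
  have hexp : Complex.exp ((P.arg : ℂ) * Complex.I)
      = Complex.exp ((∑ k, (f k).arg : ℝ) * Complex.I) :=
    mul_left_cancel₀ habs (h1.trans h2.symm)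
  have h3 : Complex.exp ((P.arg : ℂ) * Complex.I - (∑ k, (f k).arg : ℝ) * Complex.I) = 1 := by
    rw [Complex.exp_sub, hexp, div_self (Complex.exp_ne_zero _)]
  obtain ⟨m, hm⟩ := Complex.exp_eq_one_iff.1 h3
  refine ⟨m, ?_⟩
  have h4 : ((P.arg - ∑ k, (f k).arg : ℝ) : ℂ) * Complex.I
      = ((2 * Real.pi * m : ℝ) : ℂ) * Complex.I := by
    push_cast
    push_cast at hm
    linear_combination hm
  have h5 := mul_right_cancel₀ Complex.I_ne_zero h4
  exact_mod_cast h5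

lemma scalar_sqrt {ι : Type*} [Fintype ι] (d : ℝ) (hd : 0 < d) (f : ι → ℂ)
    (hf : ∀ k, f k ≠ 0) :
    ((d : ℂ) * ∏ k, f k) ^ (1/2 : ℂ)
      = Complex.exp (((Real.pi * (((∏ k, f k).arg - ∑ k, (f k).arg) / (2 * Real.pi)) : ℝ) : ℂ)
            * Complex.I)
        * (d : ℂ) ^ (1/2 : ℂ) * ∏ k, (f k) ^ (1/2 : ℂ) := by
  set P := ∏ k, f k with hP
  have hPne : P ≠ 0 := Finset.prod_ne_zero_iff.2 fun k _ => hf k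
  have hdne : (d : ℂ) ≠ 0 := by exact_mod_cast hd.ne'
  have habs : ‖P‖ ≠ 0 := norm_ne_zero_iff.2 hPne
  have hcoef : Real.pi * ((P.arg - ∑ k, (f k).arg) / (2 * Real.pi))
      = (P.arg - ∑ k, (f k).arg) / 2 := by
    field_simp
  rw [hcoef, Complex.cpow_def_of_ne_zero (mul_ne_zero hdne hPne),
    Complex.cpow_def_of_ne_zero hdne]
  have hprod : ∏ k, (f k) ^ (1/2 : ℂ) = Complex.exp ((∑ k, Complex.log (f k)) * (1/2)) := by
    rw [Finset.sum_mul, Complex.exp_sum]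
    exact Finset.prod_congr rfl fun k _ => Complex.cpow_def_of_ne_zero (hf k) _
  rw [hprod, ← Complex.exp_add, ← Complex.exp_add]
  congr 1
  have hlog : ∀ z : ℂ, Complex.log z = (Real.log ‖z‖ : ℂ) + z.arg * Complex.I :=
    fun z => rfl
  have hsum : ∑ k, Complex.log (f k)
      = (Real.log ‖P‖ : ℂ) + ((∑ k, (f k).arg : ℝ)) * Complex.I := by
    simp only [hlog]
    rw [Finset.sum_add_distrib]
    congr 1
    · have : ∑ k, Real.log ‖f k‖ = Real.log ‖P‖ := by
        rw [hP, norm_prod]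
        exact (Real.log_prod fun k _ => norm_ne_zero_iff.2 (hf k)).symm
      push_cast [← this]
      ring
    · push_cast
      rw [Finset.sum_mul]
  have habsm : ‖(d : ℂ) * P‖ = d * ‖P‖ := by
    rw [norm_mul, Complex.norm_of_nonneg hd.le]
  have hargm : ((d : ℂ) * P).arg = P.arg := Complex.arg_real_mul P hd
  have habsd : ‖(d : ℂ)‖ = d := by rw [Complex.norm_of_nonneg hd.le]
  have hargd : Complex.arg (d : ℂ) = 0 := Complex.arg_ofReal_of_nonneg hd.le
  rw [hsum, hlog ((d : ℂ) * P), hlog (d : ℂ), habsm, hargm, habsd, hargd,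
    Real.log_mul hd.ne' habs]
  push_cast
  ring

lemma det_decomp (n : ℕ) (R S : Matrix (Fin n) (Fin n) ℂ)
    (hR : R.PosDef) (Q : Matrix (Fin n) (Fin n) ℂ)
    (hQdef : Q = (posSemidefSqrtOld hR.posSemidef)⁻¹ * S * (posSemidefSqrtOld hR.posSemidef)⁻¹)
    (hQ : Q.IsHermitian) :
    (R + Complex.I • S).det
      = R.det * ∏ k, (1 + Complex.I * (hQ.eigenvalues k : ℂ)) := by
  set T := posSemidefSqrtOld hR.posSemidef with hT
  have hTT : T * T = R := by
    have hP := hR.posSemidef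
    set V : Matrix (Fin n) (Fin n) ℂ := (hP.1.eigenvectorUnitary : Matrix (Fin n) (Fin n) ℂ)
      with hV
    set D : Matrix (Fin n) (Fin n) ℂ := diagonal ((↑) ∘ (√·) ∘ hP.1.eigenvalues) with hDdef
    have hVV : star V * V = 1 := Unitary.star_mul_self_of_mem hP.1.eigenvectorUnitary.2
    have hD : D * D = diagonal (RCLike.ofReal ∘ hP.1.eigenvalues) := by
      rw [hDdef, diagonal_mul_diagonal]
      congr 1
      ext i
      simp [← Complex.ofReal_mul, Real.mul_self_sqrt (hP.eigenvalues_nonneg i)]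
    have hspecR : R = V * diagonal (RCLike.ofReal ∘ hP.1.eigenvalues) * star V :=
      hP.1.spectral_theorem
    calc T * T = V * D * (star V * V) * D * star V := by
          simp only [hT, posSemidefSqrtOld, Matrix.mul_assoc]; rfl
      _ = V * (D * D) * star V := by rw [hVV]; simp only [Matrix.mul_one, Matrix.mul_assoc]
      _ = R := by rw [hD]; exact hspecR.symm
  have hdetR : 0 < R.det := hR.det_pos
  have hdetT : T.det ≠ 0 := by
    intro h
    apply hdetR.ne'
    rw [← hTT, det_mul, h, zero_mul]
  have hTi1 : T * T⁻¹ = 1 := mul_nonsing_inv _ hdetT.isUnit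
  have hTi2 : T⁻¹ * T = 1 := nonsing_inv_mul _ hdetT.isUnit
  have hS' : T * Q * T = S := by
    rw [hQdef]
    calc T * (T⁻¹ * S * T⁻¹) * T
        = T * T⁻¹ * S * (T⁻¹ * T) := by simp only [Matrix.mul_assoc]
      _ = S := by rw [hTi1, hTi2, one_mul, mul_one]
  have hdecomp : R + Complex.I • S = T * (1 + Complex.I • Q) * T := by
    rw [mul_add, mul_one, add_mul, hTT, mul_smul_comm, smul_mul_assoc, hS']
  set U : Matrix (Fin n) (Fin n) ℂ := (hQ.eigenvectorUnitary : Matrix (Fin n) (Fin n) ℂ)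
    with hU
  have hspec : Q = U * diagonal (RCLike.ofReal ∘ hQ.eigenvalues) * star U := hQ.spectral_theorem
  have hUU : U * star U = 1 := (Matrix.mem_unitaryGroup_iff).mp hQ.eigenvectorUnitary.2
  have hdiag : 1 + Complex.I • Q
      = U * (1 + Complex.I • diagonal (RCLike.ofReal ∘ hQ.eigenvalues)) * star U := by
    rw [mul_add, mul_one, add_mul, hUU, mul_smul_comm, smul_mul_assoc, ← hspec]
  have hdet1 : (1 + Complex.I • Q).det
      = ∏ k, (1 + Complex.I * (hQ.eigenvalues k : ℂ)) := by
    have hdiag2 : (1 : Matrix (Fin n) (Fin n) ℂ)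
        + Complex.I • diagonal (RCLike.ofReal ∘ hQ.eigenvalues)
        = diagonal (fun k => 1 + Complex.I * (hQ.eigenvalues k : ℂ)) := by
      rw [← diagonal_one, ← diagonal_smul, diagonal_add]
      congr 1
    have h1 : U.det * (star U).det = 1 := by rw [← det_mul, hUU, det_one]
    rw [hdiag, det_mul, det_mul, mul_right_comm, h1, one_mul, hdiag2, det_diagonal]
  rw [hdecomp, det_mul, det_mul, mul_right_comm, ← det_mul, hTT, hdet1]

/-- With `R` Hermitian positive definite, `S` Hermitian,
`Q := (R^{1/2})⁻¹ S (R^{1/2})⁻¹`, and `μ₁, …, μₙ` the (real) eigenvalues of the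
Hermitian matrix `Q`: `det R` is a positive real,
`m := (Arg (∏ₖ (1 + iμₖ)) − ∑ₖ Arg (1 + iμₖ)) / (2π)` is an integer, and
`√(det (R + iS)) = e^{iπm} √(det R) ∏ₖ √(1 + iμₖ)` for the principal square root. -/
theorem stmt17 (n : ℕ) (hn : 1 ≤ n) (R S : Matrix (Fin n) (Fin n) ℂ)
    (hR : R.PosDef) (hS : S.IsHermitian)
    (Q : Matrix (Fin n) (Fin n) ℂ)
    (hQdef : Q = (posSemidefSqrtOld hR.posSemidef)⁻¹ * S * (posSemidefSqrtOld hR.posSemidef)⁻¹)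
    (hQ : Q.IsHermitian) :
    (∃ d : ℝ, 0 < d ∧ R.det = (d : ℂ)) ∧
    (∃ m : ℤ,
      ((∏ k, (1 + Complex.I * (hQ.eigenvalues k : ℂ))).arg
          - ∑ k, (1 + Complex.I * (hQ.eigenvalues k : ℂ)).arg) / (2 * Real.pi) = (m : ℝ)) ∧
    ((R + Complex.I • S).det) ^ (1 / 2 : ℂ)
      = Complex.exp (((Real.pi *
            (((∏ k, (1 + Complex.I * (hQ.eigenvalues k : ℂ))).arg
              - ∑ k, (1 + Complex.I * (hQ.eigenvalues k : ℂ)).arg) / (2 * Real.pi)) : ℝ) : ℂ)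
          * Complex.I)
        * (R.det) ^ (1 / 2 : ℂ)
        * ∏ k, (1 + Complex.I * (hQ.eigenvalues k : ℂ)) ^ (1 / 2 : ℂ) := by
  have hdetR : 0 < R.det := hR.det_pos
  have hre : 0 < R.det.re := by
    rw [Complex.lt_def] at hdetR
    simpa using hdetR.1
  have him : R.det.im = 0 := by
    rw [Complex.lt_def] at hdetR
    simpa using hdetR.2.symm
  have hdet : R.det = (R.det.re : ℂ) := by
    apply Complex.ext <;> simp [him]
  have hf : ∀ k, (1 + Complex.I * (hQ.eigenvalues k : ℂ)) ≠ 0 := by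
    intro k h
    have := congrArg Complex.re h
    simp at this
  refine ⟨⟨R.det.re, hre, hdet⟩, ?_, ?_⟩
  · obtain ⟨m, hm⟩ := scalar_int _ hf
    refine ⟨m, ?_⟩
    rw [hm]
    field_simp
  · rw [det_decomp n R S hR Q hQdef hQ, hdet]
    exact scalar_sqrt _ hre _ hf
end

section
/- Let θ₁, θ₂, α₁, α₂ be real numbers and k₁, k₂ integers such that αᵢ ∈ (−π, π] and θᵢ − αᵢ = 2π·kᵢ for i = 1, 2, and |θ₁ − θ₂| ≤ π. Then: (i) if α₂ − α₁ > π then k₂ = k₁ − 1; (ii) if α₂ − α₁ < −π then k₂ = k₁ + 1; (iii) if |α₂ − α₁| < π then k₂ = k₁. -/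
/-! The difference of the winding counts satisfies
`2π (k₂ - k₁) = (θ₂ - θ₁) - (α₂ - α₁)`. Since `|θ₂ - θ₁| ≤ π` and `α₂ - α₁ ∈ (-2π, 2π)`,
in each of the three cases shifting `α₂ - α₁` by the claimed multiple of `2π` leaves the
right-hand side strictly inside `(-2π, 2π)`, which pins the integer down. -/

open Real

lemma eq_zero_of_abs_two_pi_mul_lt {n : ℤ} (h : |2 * π * n| < 2 * π) : n = 0 := by
  have hπ : 0 < 2 * π := by positivity
  rw [abs_mul, abs_of_pos hπ, mul_lt_iff_lt_one_right hπ] at h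
  exact Int.abs_lt_one_iff.mp (by exact_mod_cast h)

lemma winding_count_eq_add {θ₁ θ₂ α₁ α₂ : ℝ} {k₁ k₂ : ℤ} (j : ℤ)
    (h₁ : θ₁ - α₁ = 2 * π * k₁) (h₂ : θ₂ - α₂ = 2 * π * k₂)
    (hj : |θ₂ - θ₁ - (α₂ - α₁) - 2 * π * j| < 2 * π) : k₂ = k₁ + j := by
  have hdiff : 2 * π * ((k₂ - k₁ - j : ℤ) : ℝ) = θ₂ - θ₁ - (α₂ - α₁) - 2 * π * j := by
    push_cast
    linear_combination h₁ - h₂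
  rw [← hdiff] at hj
  linarith [eq_zero_of_abs_two_pi_mul_lt hj]

/-- If `αᵢ ∈ (−π, π]`, `θᵢ − αᵢ = 2πkᵢ` with `kᵢ ∈ ℤ`, and
`|θ₁ − θ₂| ≤ π`, then: (i) `α₂ − α₁ > π → k₂ = k₁ − 1`;
(ii) `α₂ − α₁ < −π → k₂ = k₁ + 1`; (iii) `|α₂ − α₁| < π → k₂ = k₁`. -/
theorem stmt18 (θ₁ θ₂ α₁ α₂ : ℝ) (k₁ k₂ : ℤ)
    (hα₁ : α₁ ∈ Set.Ioc (-Real.pi) Real.pi)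
    (hα₂ : α₂ ∈ Set.Ioc (-Real.pi) Real.pi)
    (h₁ : θ₁ - α₁ = 2 * Real.pi * (k₁ : ℝ))
    (h₂ : θ₂ - α₂ = 2 * Real.pi * (k₂ : ℝ))
    (hθ : |θ₁ - θ₂| ≤ Real.pi) :
    (Real.pi < α₂ - α₁ → k₂ = k₁ - 1) ∧
    (α₂ - α₁ < -Real.pi → k₂ = k₁ + 1) ∧
    (|α₂ - α₁| < Real.pi → k₂ = k₁) := by
  obtain ⟨hα₁_lo, hα₁_hi⟩ := hα₁
  obtain ⟨hα₂_lo, hα₂_hi⟩ := hα₂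
  obtain ⟨hθ_lo, hθ_hi⟩ := abs_le.mp hθ
  refine ⟨fun h => ?_, fun h => ?_, fun h => ?_⟩
  · refine winding_count_eq_add (-1) h₁ h₂ (abs_lt.mpr ⟨?_, ?_⟩) <;> push_cast <;> linarith
  · refine winding_count_eq_add 1 h₁ h₂ (abs_lt.mpr ⟨?_, ?_⟩) <;> push_cast <;> linarith
  · obtain ⟨hα_lo, hα_hi⟩ := abs_lt.mp h
    rw [← add_zero k₁]
    refine winding_count_eq_add 0 h₁ h₂ (abs_lt.mpr ⟨?_, ?_⟩) <;> push_cast <;> linarith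
end

section
/- Let (λₙ)_{n≥1} be a summable sequence of nonnegative reals such that λₙ > 0 for infinitely many n, and let s ≤ 0 be real. Then for every Y > 0 there exists y > Y such that, setting w := s + iy, the infinite products ∏_{n≥1} √(1 − 2wλₙ) and ∏_{n≥1} (1 − 2wλₙ) converge and satisfy ∏_{n≥1} √(1 − 2wλₙ) = −√( ∏_{n≥1} (1 − 2wλₙ) ), where √ is the principal square root. -/
open Complex Filter

noncomputable def zf (lam : ℕ → ℝ) (s y : ℝ) (n : ℕ) : ℂ :=
  1 - 2 * ((s:ℂ) + (y:ℂ) * Complex.I) * (lam n : ℂ)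

lemma zf_re (lam : ℕ → ℝ) (s y : ℝ) (n : ℕ) : (zf lam s y n).re = 1 - 2*s*lam n := by
  simp [zf]

lemma zf_im (lam : ℕ → ℝ) (s y : ℝ) (n : ℕ) : (zf lam s y n).im = -(2*y*lam n) := by
  simp [zf]

lemma zf_re_ge (lam : ℕ → ℝ) (hnn : ∀ n, 0 ≤ lam n) (s : ℝ) (hs : s ≤ 0) (y : ℝ) (n : ℕ) :
    1 ≤ (zf lam s y n).re := by
  rw [zf_re]; nlinarith [hnn n]

lemma zf_ne_zero (lam : ℕ → ℝ) (hnn : ∀ n, 0 ≤ lam n) (s : ℝ) (hs : s ≤ 0) (y : ℝ) (n : ℕ) :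
    zf lam s y n ≠ 0 := by
  intro h
  have := zf_re_ge lam hnn s hs y n
  rw [h] at this; simp at this; linarith

lemma zf_slit (lam : ℕ → ℝ) (hnn : ∀ n, 0 ≤ lam n) (s : ℝ) (hs : s ≤ 0) (y : ℝ) (n : ℕ) :
    zf lam s y n ∈ Complex.slitPlane :=
  Or.inl (by have := zf_re_ge lam hnn s hs y n; linarith)

lemma norm_log_zf_le (lam : ℕ → ℝ) (s y : ℝ) (n : ℕ) (hnn : 0 ≤ lam n)
    (hsmall : 2 * (|s| + |y|) * lam n ≤ 1/2) :
    ‖Complex.log (zf lam s y n)‖ ≤ 3 * (|s| + |y|) * lam n := by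
  have hw : ‖(2 : ℂ) * ((s:ℂ) + (y:ℂ) * Complex.I) * (lam n : ℂ)‖ ≤ 2 * (|s| + |y|) * lam n := by
    rw [norm_mul, norm_mul]
    have h1 : ‖((s:ℂ) + (y:ℂ) * Complex.I)‖ ≤ |s| + |y| := by
      refine le_trans (norm_add_le _ _) ?_
      simp [Complex.norm_real]
    have h2 : ‖(lam n : ℂ)‖ = lam n := by simp [Complex.norm_real, _root_.abs_of_nonneg hnn]
    rw [h2]
    have : ‖(2:ℂ)‖ = 2 := by norm_num
    rw [this]
    have := mul_le_mul_of_nonneg_right (mul_le_mul_of_nonneg_left h1 (by norm_num : (0:ℝ) ≤ 2)) hnn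
    linarith
  have key : zf lam s y n = 1 + (-(2 * ((s:ℂ) + (y:ℂ) * Complex.I) * (lam n : ℂ))) := by
    rw [zf]; ring
  rw [key]
  refine le_trans (Complex.norm_log_one_add_half_le_self (by rw [norm_neg]; linarith)) ?_
  rw [norm_neg]
  linarith [hw]

lemma summable_log_zf (lam : ℕ → ℝ) (hnn : ∀ n, 0 ≤ lam n) (hsum : Summable lam)
    (s y : ℝ) : Summable (fun n => Complex.log (zf lam s y n)) := by
  have htend : Tendsto lam atTop (nhds 0) := hsum.tendsto_atTop_zero
  have hev : ∀ᶠ n in atTop, 2 * (|s| + |y|) * lam n ≤ 1/2 := by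
    rcases le_or_gt (|s| + |y|) 0 with h | h
    · filter_upwards with n
      nlinarith [hnn n]
    · have : Tendsto (fun n => 2 * (|s| + |y|) * lam n) atTop (nhds 0) := by
        simpa using htend.const_mul (2 * (|s| + |y|))
      filter_upwards [this.eventually_le_const (by norm_num : (0:ℝ) < 1/2)] with n hn
        using hn
  obtain ⟨N, hN⟩ := eventually_atTop.1 hev
  rw [← summable_nat_add_iff N]
  apply Summable.of_norm
  apply Summable.of_nonneg_of_le (fun n => norm_nonneg _)
    (fun n => norm_log_zf_le lam s y (n + N) (hnn _) (hN _ (by omega)))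
  exact ((hsum.mul_left (3 * (|s| + |y|))).comp_injective (add_left_injective N))

lemma continuous_logzf_im (lam : ℕ → ℝ) (hnn : ∀ n, 0 ≤ lam n) (s : ℝ) (hs : s ≤ 0) (n : ℕ) :
    Continuous (fun y => (Complex.log (zf lam s y n)).im) := by
  have hz : Continuous fun y : ℝ => zf lam s y n := by
    unfold zf; fun_prop
  refine Complex.continuous_im.comp ?_
  rw [continuous_iff_continuousAt]
  intro y
  exact hz.continuousAt.clog (zf_slit lam hnn s hs y n)

lemma continuousOn_theta (lam : ℕ → ℝ) (hnn : ∀ n, 0 ≤ lam n) (hsum : Summable lam)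
    (s : ℝ) (hs : s ≤ 0) (A B : ℝ) (hA : 0 ≤ A) :
    ContinuousOn (fun y => ∑' n, (Complex.log (zf lam s y n)).im) (Set.Icc A B) := by
  have htend : Tendsto lam atTop (nhds 0) := hsum.tendsto_atTop_zero
  have hev : ∀ᶠ n in atTop, 2 * (|s| + |B|) * lam n ≤ 1/2 := by
    rcases le_or_gt (|s| + |B|) 0 with h | h
    · filter_upwards with n; nlinarith [hnn n]
    · have : Tendsto (fun n => 2 * (|s| + |B|) * lam n) atTop (nhds 0) := by
        simpa using htend.const_mul (2 * (|s| + |B|))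
      filter_upwards [this.eventually_le_const (by norm_num : (0:ℝ) < 1/2)] with n hn using hn
  refine TendstoUniformlyOn.continuousOn
    (tendstoUniformlyOn_tsum_of_cofinite_eventually
      (hsum.mul_left (3 * (|s| + |B|))) (s := Set.Icc A B)
      (f := fun n y => (Complex.log (zf lam s y n)).im) ?_) ?_
  · rw [Nat.cofinite_eq_atTop]
    filter_upwards [hev] with n hn y hy
    have hyB : |y| ≤ |B| := by
      rw [Set.mem_Icc] at hy
      rw [_root_.abs_of_nonneg (le_trans hA hy.1)]
      exact le_trans hy.2 (le_abs_self B)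
    have h1 : 2 * (|s| + |y|) * lam n ≤ 1/2 := by nlinarith [hnn n, abs_nonneg s]
    calc ‖(Complex.log (zf lam s y n)).im‖ ≤ ‖Complex.log (zf lam s y n)‖ :=
          Complex.abs_im_le_norm _
      _ ≤ 3 * (|s| + |y|) * lam n := norm_log_zf_le lam s y n (hnn n) h1
      _ ≤ 3 * (|s| + |B|) * lam n := by nlinarith [hnn n]
  · exact (Eventually.of_forall fun t =>
      (continuous_finset_sum t fun n _ => continuous_logzf_im lam hnn s hs n).continuousOn).frequently

lemma logzf_im_nonpos (lam : ℕ → ℝ) (hnn : ∀ n, 0 ≤ lam n) (s : ℝ) (hs : s ≤ 0)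
    (y : ℝ) (hy : 0 ≤ y) (n : ℕ) : (Complex.log (zf lam s y n)).im ≤ 0 := by
  rw [Complex.log_im]
  rcases lt_or_eq_of_le (by nlinarith [zf_im lam s y n, hnn n] : (zf lam s y n).im ≤ 0) with h | h
  · exact le_of_lt (Complex.arg_neg_iff.2 h)
  · exact le_of_eq (Complex.arg_eq_zero_iff.2 ⟨by linarith [zf_re_ge lam hnn s hs y n], h⟩)

lemma logzf_im_le (lam : ℕ → ℝ) (hnn : ∀ n, 0 ≤ lam n) (s : ℝ) (hs : s ≤ 0)
    (y : ℝ) (n : ℕ) (h : (zf lam s y n).re ≤ -(zf lam s y n).im) :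
    (Complex.log (zf lam s y n)).im ≤ -(Real.pi/4) := by
  rw [Complex.log_im]
  have hre : 0 < (zf lam s y n).re := by linarith [zf_re_ge lam hnn s hs y n]
  have habs : |Complex.arg (zf lam s y n)| < Real.pi / 2 :=
    Complex.abs_arg_lt_pi_div_two_iff.2 (Or.inl hre)
  have harg : Complex.arg (zf lam s y n) =
      Real.arctan ((zf lam s y n).im / (zf lam s y n).re) := by
    rw [← Complex.tan_arg, Real.arctan_tan (by linarith [abs_lt.1 habs |>.1])
      (abs_lt.1 habs |>.2)]
  rw [harg]
  have : (zf lam s y n).im / (zf lam s y n).re ≤ -1 := by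
    rw [div_le_iff₀ hre]; linarith
  calc Real.arctan ((zf lam s y n).im / (zf lam s y n).re) ≤ Real.arctan (-1) :=
        Real.arctan_strictMono.monotone this
    _ = -(Real.pi/4) := by rw [Real.arctan_neg, Real.arctan_one]



/-- For a summable sequence `(λₙ)` of nonnegative reals with `λₙ > 0` for
infinitely many `n`, and `s ≤ 0`, for every `Y > 0` there is `y > Y` such that, with
`w := s + iy`, the infinite products `∏ₙ √(1 − 2wλₙ)` and `∏ₙ (1 − 2wλₙ)` converge and
`∏ₙ √(1 − 2wλₙ) = −√(∏ₙ (1 − 2wλₙ))` for the principal square root. -/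
theorem stmt19 (lam : ℕ → ℝ) (hnn : ∀ n, 0 ≤ lam n) (hsum : Summable lam)
    (hinf : {n : ℕ | 0 < lam n}.Infinite) (s : ℝ) (hs : s ≤ 0) :
    ∀ Y : ℝ, 0 < Y → ∃ y : ℝ, Y < y ∧
      Multipliable
        (fun n => (1 - 2 * ((s : ℂ) + (y : ℂ) * Complex.I) * (lam n : ℂ)) ^ (1 / 2 : ℂ)) ∧
      Multipliable (fun n => 1 - 2 * ((s : ℂ) + (y : ℂ) * Complex.I) * (lam n : ℂ)) ∧
      (∏' n, (1 - 2 * ((s : ℂ) + (y : ℂ) * Complex.I) * (lam n : ℂ)) ^ (1 / 2 : ℂ))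
        = -((∏' n, (1 - 2 * ((s : ℂ) + (y : ℂ) * Complex.I) * (lam n : ℂ))) ^ (1 / 2 : ℂ)) := by
  intro Y hY
  set θ : ℝ → ℝ := fun t => ∑' n, (Complex.log (zf lam s t n)).im with hθdef
  set A : ℝ := Y + 1 with hAdef
  have hA0 : 0 < A := by linarith
  have hπ := Real.pi_pos
  -- summability of imaginary parts
  have hImsum : ∀ t : ℝ, Summable (fun n => (Complex.log (zf lam s t n)).im) := fun t =>
    ((summable_log_zf lam hnn hsum s t).hasSum.mapL Complex.imCLM).summable
  -- θ A is a nonpositive number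
  have ht0 : θ A ≤ 0 := tsum_nonpos (logzf_im_nonpos lam hnn s hs A hA0.le)
  -- choose target value c
  obtain ⟨k, hk⟩ := exists_nat_gt ((-θ A) / (4 * Real.pi))
  set c : ℝ := -((4 * (k:ℝ) + 2) * Real.pi) with hcdef
  have hc_lt : c < θ A := by
    rw [div_lt_iff₀ (by linarith)] at hk
    rw [hcdef]; nlinarith
  have hc_neg : c < 0 := lt_of_lt_of_le hc_lt ht0
  -- choose m and a finite set F of indices with positive lam
  obtain ⟨m, hm⟩ := exists_nat_gt ((-c) / (Real.pi / 4))
  have hm' : (-c) < (m:ℝ) * (Real.pi / 4) := by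
    rw [div_lt_iff₀ (by linarith)] at hm; linarith
  obtain ⟨F, hFsub, hFcard⟩ := hinf.exists_subset_card_eq m
  -- choose B
  set B : ℝ := max A (F.sum fun n => (1 - 2*s*lam n) / (2 * lam n)) with hBdef
  have hAB : A ≤ B := le_max_left _ _
  have hB_term : ∀ n ∈ F, (zf lam s B n).re ≤ -(zf lam s B n).im := by
    intro n hn
    have hpos : 0 < lam n := hFsub hn
    have hterm_nonneg : ∀ i ∈ F, 0 ≤ (1 - 2*s*lam i) / (2 * lam i) := by
      intro i hi
      have : 0 < lam i := hFsub hi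
      apply div_nonneg (by nlinarith [hnn i]) (by linarith)
    have hBge : (1 - 2*s*lam n) / (2 * lam n) ≤ B :=
      le_trans (Finset.single_le_sum hterm_nonneg hn) (le_max_right _ _)
    rw [zf_re, zf_im, neg_neg]
    calc 1 - 2*s*lam n = ((1 - 2*s*lam n) / (2 * lam n)) * (2 * lam n) := by
          field_simp
      _ ≤ B * (2 * lam n) := by
          apply mul_le_mul_of_nonneg_right hBge (by linarith)
      _ = 2 * B * lam n := by ring
  -- θ B < c
  have hθB : θ B < c := by
    have hB0 : 0 ≤ B := le_trans hA0.le hAB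
    have hle : θ B ≤ F.sum fun n => (Complex.log (zf lam s B n)).im := by
      have hsummable := hImsum B
      have h1 : F.sum (fun n => -(Complex.log (zf lam s B n)).im) ≤
          ∑' n, -(Complex.log (zf lam s B n)).im :=
        Summable.sum_le_tsum F (fun i _ => by
          simpa using logzf_im_nonpos lam hnn s hs B hB0 i) hsummable.neg
      rw [tsum_neg, Finset.sum_neg_distrib] at h1
      linarith
    have h2 : F.sum (fun n => (Complex.log (zf lam s B n)).im) ≤ -(m * (Real.pi/4)) := by
      calc F.sum (fun n => (Complex.log (zf lam s B n)).im)
          ≤ F.sum (fun _ => -(Real.pi/4)) :=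
            Finset.sum_le_sum (fun n hn => logzf_im_le lam hnn s hs B n (hB_term n hn))
        _ = -(m * (Real.pi/4)) := by
            rw [Finset.sum_const, hFcard]; push_cast; ring
    linarith
  -- IVT
  have hcont := continuousOn_theta lam hnn hsum s hs A B hA0.le
  have hmem : c ∈ Set.Icc (θ B) (θ A) := ⟨hθB.le, hc_lt.le⟩
  obtain ⟨y, hyIcc, hyc⟩ := intermediate_value_Icc' hAB hcont hmem
  have hy0 : 0 ≤ y := le_trans hA0.le hyIcc.1
  refine ⟨y, by linarith [hyIcc.1], ?_⟩
  -- set up the sum S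
  set S : ℂ := ∑' n, Complex.log (zf lam s y n) with hSdef
  have hS : HasSum (fun n => Complex.log (zf lam s y n)) S :=
    (summable_log_zf lam hnn hsum s y).hasSum
  have hSim : S.im = c := by
    have := (hS.mapL Complex.imCLM).tsum_eq
    simpa [hθdef] using this.symm.trans hyc
  -- product equals exp S
  have hProd : HasProd (fun n => zf lam s y n) (Complex.exp S) := by
    have h := hS.cexp
    have heq : (fun n => Complex.exp (Complex.log (zf lam s y n))) = fun n => zf lam s y n :=
      funext fun n => Complex.exp_log (zf_ne_zero lam hnn s hs y n)
    rwa [Function.comp_def, heq] at h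
  -- sqrt product equals exp (S * (1/2))
  have hProd2 : HasProd (fun n => zf lam s y n ^ (1/2 : ℂ)) (Complex.exp (S * (1/2))) := by
    have h := (hS.mul_right ((1:ℂ)/2)).cexp
    have heq : (fun n => Complex.exp (Complex.log (zf lam s y n) * (1/2))) =
        fun n => zf lam s y n ^ (1/2 : ℂ) :=
      funext fun n => (Complex.cpow_def_of_ne_zero (zf_ne_zero lam hnn s hs y n) _).symm
    rwa [Function.comp_def, heq] at h
  -- the key exponential computations
  set r : ℝ := S.re with hrdef
  have hSsplit : S = (r : ℂ) + (c : ℂ) * Complex.I := by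
    rw [← hSim, hrdef]; exact (Complex.re_add_im S).symm
  have hexp_c : Complex.exp ((c:ℂ) * Complex.I) = 1 := by
    have : ((c:ℂ) * Complex.I) = ((-(2*(k:ℤ)+1) : ℤ) : ℂ) * (2 * (Real.pi:ℂ) * Complex.I) := by
      rw [hcdef]; push_cast; ring
    rw [this, Complex.exp_int_mul_two_pi_mul_I]
  have hexp_c2 : Complex.exp ((c/2 : ℝ) * Complex.I) = -1 := by
    have h1 : (((c/2 : ℝ)):ℂ) * Complex.I = ((-(2*(k:ℤ)+1) : ℤ) : ℂ) * ((Real.pi:ℂ) * Complex.I) := by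
      rw [hcdef]; push_cast; ring
    rw [h1, Complex.exp_int_mul, Complex.exp_pi_mul_I]
    exact Odd.neg_one_zpow ⟨-(k:ℤ)-1, by ring⟩
  have hexpS : Complex.exp S = Complex.exp (r : ℂ) := by
    rw [hSsplit, Complex.exp_add, hexp_c, mul_one]
  have hexpS2 : Complex.exp (S * (1/2)) = -Complex.exp ((r/2 : ℝ) : ℂ) := by
    have : S * (1/2) = ((r/2 : ℝ) : ℂ) + ((c/2 : ℝ) : ℂ) * Complex.I := by
      rw [hSsplit]; push_cast; ring
    rw [this, Complex.exp_add, hexp_c2, mul_neg_one]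
  -- compute (exp S) ^ (1/2)
  have hPow : (Complex.exp S) ^ (1/2 : ℂ) = Complex.exp ((r/2 : ℝ) : ℂ) := by
    rw [hexpS, Complex.cpow_def_of_ne_zero (Complex.exp_ne_zero _),
      Complex.log_exp (by simpa using hπ) (by simpa using hπ.le)]
    push_cast
    ring_nf
  -- conclude
  refine ⟨hProd2.multipliable, hProd.multipliable, ?_⟩
  have e1 : (∏' n, zf lam s y n ^ (1/2 : ℂ)) = Complex.exp (S * (1/2)) := hProd2.tprod_eq
  have e2 : (∏' n, zf lam s y n) = Complex.exp S := hProd.tprod_eq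
  show (∏' n, zf lam s y n ^ (1/2 : ℂ)) = -((∏' n, zf lam s y n) ^ (1/2 : ℂ))
  rw [e1, e2, hPow, hexpS2]
end
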